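/- arXiv:1902.08493 — 4 statements merged into one kernel-verified Lean document; each statement's English description precedes it below -/
import Mathlib

section
/- Let X be an infinite, locally finite, connected, quasi-transitive simple graph with a graph height function (h,Γ). Then for every vertex v and all n, m ≥ 0 one has b_{n,v} · b_m ≤ b_{n+m,v}; consequently b_n · b_m ≤ b_{n+m}, i.e. the sequence (b_n) is supermultiplicative. -/
open Filter Finset

noncomputable section

variable {V : Type*}

/-- `w : ℕ → V` represents a walk of length `n` from `v`: consecutive vertices are
adjacent and the values are pinned to `w n` from index `n` on. -/
noncomputable def IsWalkFrom (G : SimpleGraph V) (n : ℕ) (v : V) (w : ℕ → V) : Prop :=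
  w 0 = v ∧ (∀ i < n, G.Adj (w i) (w (i + 1))) ∧ (∀ i, n ≤ i → w i = w n)

/-- A self-avoiding walk of length `n` starting at `v`. -/
noncomputable def IsSAWFrom (G : SimpleGraph V) (n : ℕ) (v : V) (w : ℕ → V) : Prop :=
  IsWalkFrom G n v w ∧ Set.InjOn w (Set.Iic n)

/-- A bridge with respect to the height function `h`. -/
noncomputable def IsBridgeFrom (G : SimpleGraph V) (h : V → ℤ) (n : ℕ) (v : V) (w : ℕ → V) : Prop :=
  IsSAWFrom G n v w ∧ ∀ i, 1 ≤ i → i ≤ n → h (w 0) < h (w i) ∧ h (w i) ≤ h (w n)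

/-- A reversed bridge with respect to the height function `h`. -/
noncomputable def IsRBridgeFrom (G : SimpleGraph V) (h : V → ℤ) (n : ℕ) (v : V) (w : ℕ → V) : Prop :=
  IsSAWFrom G n v w ∧ ∀ i, 1 ≤ i → i ≤ n → h (w 0) > h (w i) ∧ h (w i) ≥ h (w n)

/-- A half-space walk with respect to the height function `h`. -/
noncomputable def IsHSWFrom (G : SimpleGraph V) (h : V → ℤ) (n : ℕ) (v : V) (w : ℕ → V) : Prop :=
  IsSAWFrom G n v w ∧ ∀ i, 1 ≤ i → i ≤ n → h (w 0) < h (w i)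

/-- The span of (the first `n+1` vertices of) a walk. -/
noncomputable def walkSpan (h : V → ℤ) (n : ℕ) (w : ℕ → V) : ℤ :=
  ((Finset.range (n + 1)).sup' ⟨0, by simp⟩ fun i => h (w i)) -
    ((Finset.range (n + 1)).inf' ⟨0, by simp⟩ fun i => h (w i))

/-- Number of SAWs of length `n` starting at `v`. -/
noncomputable def sawCount (G : SimpleGraph V) (n : ℕ) (v : V) : ℕ :=
  Nat.card {w : ℕ → V // IsSAWFrom G n v w}

/-- Number of bridges of length `n` starting at `v`. -/
noncomputable def bridgeCount (G : SimpleGraph V) (h : V → ℤ) (n : ℕ) (v : V) : ℕ :=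
  Nat.card {w : ℕ → V // IsBridgeFrom G h n v w}

/-- Number of reversed bridges of length `n` starting at `v`. -/
noncomputable def rbridgeCount (G : SimpleGraph V) (h : V → ℤ) (n : ℕ) (v : V) : ℕ :=
  Nat.card {w : ℕ → V // IsRBridgeFrom G h n v w}

/-- Number of half-space walks of length `n` starting at `v`. -/
noncomputable def hswCount (G : SimpleGraph V) (h : V → ℤ) (n : ℕ) (v : V) : ℕ :=
  Nat.card {w : ℕ → V // IsHSWFrom G h n v w}

/-- Number of bridges of length `n` and span `a` starting at `v`. -/
noncomputable def bridgeSpanCount (G : SimpleGraph V) (h : V → ℤ) (n : ℕ) (v : V) (a : ℤ) : ℕ :=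
  Nat.card {w : ℕ → V // IsBridgeFrom G h n v w ∧ walkSpan h n w = a}

/-- Number of reversed bridges of length `n` and span `a` starting at `v`. -/
noncomputable def rbridgeSpanCount (G : SimpleGraph V) (h : V → ℤ) (n : ℕ) (v : V) (a : ℤ) : ℕ :=
  Nat.card {w : ℕ → V // IsRBridgeFrom G h n v w ∧ walkSpan h n w = a}

/-- `c_n`: maximal number of SAWs of length `n` over all starting vertices. -/
noncomputable def sawSup (G : SimpleGraph V) (n : ℕ) : ℕ :=
  sSup {m | ∃ v : V, m = sawCount G n v}

/-- `b_n`: minimal number of bridges of length `n` over all starting vertices. -/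
noncomputable def bridgeInf (G : SimpleGraph V) (h : V → ℤ) (n : ℕ) : ℕ :=
  sInf {m | ∃ v : V, m = bridgeCount G h n v}

/-- `b̄_n`: minimal number of reversed bridges of length `n` over all starting vertices. -/
noncomputable def rbridgeInf (G : SimpleGraph V) (h : V → ℤ) (n : ℕ) : ℕ :=
  sInf {m | ∃ v : V, m = rbridgeCount G h n v}

/-- `idx` together with the spans `a` form the canonical decomposition of the walk `w`
of length `n` into an alternating sequence of `k` bridges and reversed bridges. -/
noncomputable def IsCanonicalDecomp (h : V → ℤ) (n : ℕ) (w : ℕ → V) (k : ℕ) (a : ℕ → ℤ)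
    (idx : ℕ → ℕ) : Prop :=
  idx 0 = 0 ∧ idx k = n ∧
  ∀ j, 1 ≤ j → j ≤ k →
    idx (j - 1) < idx j ∧ idx j ≤ n ∧
    a j = |h (w (idx j)) - h (w (idx (j - 1)))| ∧
    (∀ i, idx (j - 1) ≤ i → i ≤ n → |h (w i) - h (w (idx (j - 1)))| ≤ a j) ∧
    (∀ i, idx j < i → i ≤ n → |h (w i) - h (w (idx (j - 1)))| < a j)

/-- `h_{n,v}(a_1,…,a_k)`: number of half-space walks of length `n` from `v` whose
canonical decomposition has span sequence `a 1, …, a k`. -/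
noncomputable def hswSeqCount (G : SimpleGraph V) (h : V → ℤ) (n : ℕ) (v : V) (k : ℕ)
    (a : ℕ → ℤ) : ℕ :=
  Nat.card {w : ℕ → V // IsHSWFrom G h n v w ∧ ∃ idx : ℕ → ℕ,
    IsCanonicalDecomp h n w k a idx}

/-- The group `Γ` acts quasi-transitively. -/
noncomputable def QuasiTransitiveSub (G : SimpleGraph V) (Γ : Subgroup (G ≃g G)) : Prop :=
  ∃ S : Finset V, ∀ v : V, ∃ γ ∈ Γ, ∃ s ∈ S, γ s = v

/-- The graph `G` is quasi-transitive. -/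
noncomputable def QuasiTransitive (G : SimpleGraph V) : Prop :=
  ∃ S : Finset V, ∀ v : V, ∃ γ : G ≃g G, ∃ s ∈ S, γ s = v

/-- `(h, Γ)` is a graph height function on `G`. -/
noncomputable def IsGraphHeightFunction (G : SimpleGraph V) (h : V → ℤ) (Γ : Subgroup (G ≃g G)) : Prop :=
  QuasiTransitiveSub G Γ ∧
  (∀ γ ∈ Γ, ∀ u v : V, h (γ v) - h (γ u) = h v - h u) ∧
  (∀ v : V, ∃ u w : V, G.Adj v u ∧ G.Adj v w ∧ h u < h v ∧ h v < h w)

/-- `P_D A`: number of partitions of `A` into distinct parts. -/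
noncomputable def distinctPartitionCount (A : ℕ) : ℕ := (Nat.Partition.distincts A).card

noncomputable def bridgeBeta (G : SimpleGraph V) (h : V → ℤ) : ℝ :=
  Filter.limsup (fun n : ℕ => (bridgeInf G h n : ℝ) ^ (1 / (n : ℝ))) atTop

noncomputable def rbridgeBeta (G : SimpleGraph V) (h : V → ℤ) : ℝ :=
  Filter.limsup (fun n : ℕ => (rbridgeInf G h n : ℝ) ^ (1 / (n : ℝ))) atTop

noncomputable def betaMax (G : SimpleGraph V) (h : V → ℤ) : ℝ :=
  max (bridgeBeta G h) (rbridgeBeta G h)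

section AuxProof

variable {V : Type*} (G : SimpleGraph V)

private def ballSet (v : V) : ℕ → Set V
  | 0 => {v}
  | n + 1 => ballSet v n ∪ ⋃ u ∈ ballSet v n, G.neighborSet u

private lemma ballSet_finite (hlf : ∀ v : V, (G.neighborSet v).Finite) (v : V) :
    ∀ n, (ballSet G v n).Finite
  | 0 => Set.finite_singleton v
  | n + 1 => ((ballSet_finite hlf v n).union
      ((ballSet_finite hlf v n).biUnion fun u _ => hlf u))

private lemma ballSet_mono (v : V) {i j : ℕ} (hij : i ≤ j) :
    ballSet G v i ⊆ ballSet G v j := by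
  induction j with
  | zero => obtain rfl : i = 0 := Nat.le_zero.mp hij; exact subset_rfl
  | succ j ih =>
    by_cases h' : i ≤ j
    · exact (ih h').trans (by rw [ballSet]; exact Set.subset_union_left)
    · obtain rfl : i = j + 1 := by omega
      exact subset_rfl

private lemma walk_mem_ballSet {n : ℕ} {v : V} {w : ℕ → V} (hw : IsWalkFrom G n v w) :
    ∀ i, i ≤ n → w i ∈ ballSet G v i := by
  intro i
  induction i with
  | zero => intro _; rw [hw.1, ballSet]; exact Set.mem_singleton v
  | succ i ih =>
    intro hi
    have h1 : w i ∈ ballSet G v i := ih (by omega)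
    have h2 : w (i + 1) ∈ G.neighborSet (w i) := hw.2.1 i (by omega)
    rw [ballSet]
    exact Or.inr (Set.mem_biUnion h1 h2)

private lemma walkFrom_finite (hlf : ∀ v : V, (G.neighborSet v).Finite) (n : ℕ) (v : V) :
    Finite {w : ℕ → V // IsWalkFrom G n v w} := by
  have hB : (ballSet G v n).Finite := ballSet_finite G hlf v n
  haveI := hB.to_subtype
  refine Finite.of_injective (β := Fin (n + 1) → (ballSet G v n)) (fun w => fun i =>
    ⟨w.1 i, ballSet_mono G v (Nat.lt_succ_iff.mp i.2)
      (walk_mem_ballSet G w.2 i (Nat.lt_succ_iff.mp i.2))⟩) ?_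
  intro w x hwx
  apply Subtype.ext; funext i
  by_cases hi : i ≤ n
  · exact congrArg Subtype.val (congrFun hwx ⟨i, Nat.lt_succ_of_le hi⟩)
  · rw [w.2.2.2 i (by omega), x.2.2.2 i (by omega)]
    exact congrArg Subtype.val (congrFun hwx ⟨n, Nat.lt_succ_self n⟩)

private lemma bridgeFrom_finite (hlf : ∀ v : V, (G.neighborSet v).Finite) (h : V → ℤ)
    (n : ℕ) (v : V) : Finite {w : ℕ → V // IsBridgeFrom G h n v w} := by
  haveI := walkFrom_finite G hlf n v
  refine Finite.of_injective
    (fun w => (⟨w.1, w.2.1.1⟩ : {w : ℕ → V // IsWalkFrom G n v w})) ?_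
  intro a b hab
  have h2 := Subtype.ext_iff.mp hab
  exact Subtype.ext h2

private def concatW (n : ℕ) (w w' : ℕ → V) : ℕ → V := fun i => if i ≤ n then w i else w' (i - n)

variable {G}

private lemma concat_bridge {h : V → ℤ} {n m : ℕ} {v : V} {w w' : ℕ → V}
    (hw : IsBridgeFrom G h n v w) (hw' : IsBridgeFrom G h m (w n) w') :
    IsBridgeFrom G h (n + m) v (concatW n w w') := by
  obtain ⟨⟨⟨hw0, hwadj, hwpin⟩, hwinj⟩, hwbr⟩ := hw
  obtain ⟨⟨⟨hw0', hwadj', hwpin'⟩, hwinj'⟩, hwbr'⟩ := hw'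
  set z := concatW n w w' with hzdef
  have hz1 : ∀ i, i ≤ n → z i = w i := fun i hi => if_pos hi
  have hz2 : ∀ i, n ≤ i → z i = w' (i - n) := by
    intro i hi
    rcases eq_or_lt_of_le hi with heq | hlt
    · subst heq
      show (if n ≤ n then w n else w' (n - n)) = w' (n - n)
      rw [if_pos le_rfl, Nat.sub_self, hw0']
    · exact if_neg (by omega)
  have hA : ∀ i, i ≤ n → h (w i) ≤ h (w n) := by
    intro i hi
    rcases Nat.eq_zero_or_pos i with rfl | hpos
    · rcases Nat.eq_zero_or_pos n with rfl | hn
      · exact le_rfl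
      · exact le_of_lt (hwbr n hn le_rfl).1
    · exact (hwbr i hpos hi).2
  have hA' : ∀ i, i ≤ m → h (w' i) ≤ h (w' m) := by
    intro i hi
    rcases Nat.eq_zero_or_pos i with rfl | hpos
    · rcases Nat.eq_zero_or_pos m with rfl | hm
      · exact le_rfl
      · exact le_of_lt (hwbr' m hm le_rfl).1
    · exact (hwbr' i hpos hi).2
  have hB : ∀ j, n < j → j ≤ n + m → h (w n) < h (w' (j - n)) := by
    intro j h1 h2
    have := (hwbr' (j - n) (by omega) (by omega)).1
    rwa [hw0'] at this
  have hzl : z (n + m) = w' m := by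
    rw [hz2 (n + m) (by omega)]
    congr 1
    omega
  refine ⟨⟨⟨?_, ?_, ?_⟩, ?_⟩, ?_⟩
  · rw [hz1 0 (Nat.zero_le n), hw0]
  · intro i hi
    by_cases hin : i < n
    · rw [hz1 i (by omega), hz1 (i + 1) (by omega)]; exact hwadj i hin
    · rw [hz2 i (by omega), hz2 (i + 1) (by omega)]
      have he : (i + 1) - n = (i - n) + 1 := by omega
      rw [he]
      exact hwadj' (i - n) (by omega)
  · intro i hi
    rw [hz2 i (by omega), hzl, hwpin' (i - n) (by omega)]
  · intro i hi j hj hij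
    simp only [Set.mem_Iic] at hi hj
    by_cases hin : i ≤ n <;> by_cases hjn : j ≤ n
    · rw [hz1 i hin, hz1 j hjn] at hij
      exact hwinj (Set.mem_Iic.mpr hin) (Set.mem_Iic.mpr hjn) hij
    · exfalso
      rw [hz1 i hin, hz2 j (by omega)] at hij
      have h1 : h (w i) ≤ h (w n) := hA i hin
      have h2 : h (w n) < h (w' (j - n)) := hB j (by omega) hj
      rw [hij] at h1
      omega
    · exfalso
      rw [hz2 i (by omega), hz1 j hjn] at hij
      have h1 : h (w j) ≤ h (w n) := hA j hjn
      have h2 : h (w n) < h (w' (i - n)) := hB i (by omega) hi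
      rw [← hij] at h1
      omega
    · rw [hz2 i (by omega), hz2 j (by omega)] at hij
      have := hwinj' (Set.mem_Iic.mpr (show i - n ≤ m by omega))
        (Set.mem_Iic.mpr (show j - n ≤ m by omega)) hij
      omega
  · intro i h1i hi
    have hzf : z 0 = w 0 := hz1 0 (Nat.zero_le n)
    constructor
    · rw [hzf]
      by_cases hin : i ≤ n
      · rw [hz1 i hin]; exact (hwbr i h1i hin).1
      · rw [hz2 i (by omega)]
        calc h (w 0) ≤ h (w n) := hA 0 (Nat.zero_le n)
          _ < h (w' (i - n)) := hB i (by omega) hi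
    · rw [hzl]
      by_cases hin : i ≤ n
      · rw [hz1 i hin]
        calc h (w i) ≤ h (w n) := hA i hin
          _ = h (w' 0) := by rw [hw0']
          _ ≤ h (w' m) := hA' 0 (Nat.zero_le m)
      · rw [hz2 i (by omega)]; exact hA' (i - n) (by omega)

private lemma concat_left {n : ℕ} {v : V} {w w' : ℕ → V}
    (hw : IsWalkFrom G n v w) (i : ℕ) : w i = concatW n w w' (min i n) := by
  show w i = if min i n ≤ n then w (min i n) else _
  rw [if_pos (min_le_right i n)]
  by_cases hi : i ≤ n
  · rw [min_eq_left hi]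
  · rw [min_eq_right (by omega), hw.2.2 i (by omega)]

private lemma concat_right {n m : ℕ} {w w' : ℕ → V}
    (hw' : IsWalkFrom G m (w n) w') (i : ℕ) : w' i = concatW n w w' (n + min i m) := by
  have hgen : ∀ j, j ≤ m → w' j = concatW n w w' (n + j) := by
    intro j hj
    rcases Nat.eq_zero_or_pos j with rfl | hpos
    · show w' 0 = if n + 0 ≤ n then w (n + 0) else _
      rw [if_pos (by omega), hw'.1]
      rfl
    · show w' j = if n + j ≤ n then _ else w' ((n + j) - n)
      rw [if_neg (by omega)]
      congr 1
      omega
  by_cases him : i ≤ m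
  · rw [min_eq_left him]; exact hgen i him
  · rw [min_eq_right (by omega), hw'.2.2 i (by omega)]
    exact hgen m le_rfl

private lemma key_ineq (hlf : ∀ v : V, (G.neighborSet v).Finite) (h : V → ℤ) (v : V)
    (n m : ℕ) : bridgeCount G h n v * bridgeInf G h m ≤ bridgeCount G h (n + m) v := by
  classical
  have hle : ∀ u : V, bridgeInf G h m ≤ bridgeCount G h m u :=
    fun u => Nat.sInf_le ⟨u, rfl⟩
  have hemb : ∀ w : {w : ℕ → V // IsBridgeFrom G h n v w},
      Nonempty (Fin (bridgeInf G h m) ↪ {w' : ℕ → V // IsBridgeFrom G h m (w.1 n) w'}) := by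
    intro w
    haveI := bridgeFrom_finite G hlf h m (w.1 n)
    haveI : Fintype {w' : ℕ → V // IsBridgeFrom G h m (w.1 n) w'} := Fintype.ofFinite _
    apply Function.Embedding.nonempty_of_card_le
    rw [Fintype.card_fin]
    calc bridgeInf G h m ≤ bridgeCount G h m (w.1 n) := hle _
      _ = Fintype.card _ := Nat.card_eq_fintype_card
  have emb := fun w => Classical.choice (hemb w)
  haveI := bridgeFrom_finite G hlf h (n + m) v
  have key : Function.Injective
      (fun p : {w : ℕ → V // IsBridgeFrom G h n v w} × Fin (bridgeInf G h m) =>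
        (⟨concatW n p.1.1 (emb p.1 p.2).1, concat_bridge p.1.2 (emb p.1 p.2).2⟩ :
          {z : ℕ → V // IsBridgeFrom G h (n + m) v z})) := by
    rintro ⟨w, k⟩ ⟨x, l⟩ hp
    have hz : concatW n w.1 (emb w k).1 = concatW n x.1 (emb x l).1 :=
      congrArg Subtype.val hp
    have hwx : w = x := by
      apply Subtype.ext; funext i
      calc w.1 i = concatW n w.1 (emb w k).1 (min i n) := concat_left w.2.1.1 i
        _ = concatW n x.1 (emb x l).1 (min i n) := by rw [hz]
        _ = x.1 i := (concat_left x.2.1.1 i).symm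
    obtain rfl := hwx
    have hkl : emb w k = emb w l := by
      apply Subtype.ext; funext i
      calc (emb w k).1 i = concatW n w.1 (emb w k).1 (n + min i m) :=
            concat_right (emb w k).2.1.1 i
        _ = concatW n w.1 (emb w l).1 (n + min i m) := by rw [hz]
        _ = (emb w l).1 i := (concat_right (emb w l).2.1.1 i).symm
    have : k = l := (emb w).injective hkl
    rw [this]
  have hcard := Nat.card_le_card_of_injective _ key
  rw [Nat.card_prod, Nat.card_eq_of_equiv_fin (Equiv.refl _)] at hcard
  exact hcard

end AuxProof

/-- `b_{n,v} · b_m ≤ b_{n+m,v}`, and consequently `b_n · b_m ≤ b_{n+m}`. -/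
theorem statement_2 {V : Type*} (G : SimpleGraph V)
    (hinf : Infinite V) (hlf : ∀ v : V, (G.neighborSet v).Finite)
    (hconn : G.Connected) (hqt : QuasiTransitive G)
    (h : V → ℤ) (Γ : Subgroup (G ≃g G)) (hghf : IsGraphHeightFunction G h Γ) :
    (∀ (v : V) (n m : ℕ),
      bridgeCount G h n v * bridgeInf G h m ≤ bridgeCount G h (n + m) v) ∧
    (∀ n m : ℕ, bridgeInf G h n * bridgeInf G h m ≤ bridgeInf G h (n + m)) := by
  refine ⟨fun v n m => key_ineq hlf h v n m, ?_⟩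
  intro n m
  haveI := hinf
  obtain ⟨v⟩ : Nonempty V := inferInstance
  have hmem : bridgeInf G h (n + m) ∈ {k | ∃ u : V, k = bridgeCount G h (n + m) u} :=
    Nat.sInf_mem ⟨bridgeCount G h (n + m) v, v, rfl⟩
  obtain ⟨v₀, hv₀⟩ := hmem
  calc bridgeInf G h n * bridgeInf G h m
      ≤ bridgeCount G h n v₀ * bridgeInf G h m :=
        Nat.mul_le_mul_right _ (Nat.sInf_le ⟨v₀, rfl⟩)
    _ ≤ bridgeCount G h (n + m) v₀ := key_ineq hlf h v₀ n m
    _ = bridgeInf G h (n + m) := hv₀.symm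
end
end

section
/- Let X be an infinite, locally finite, connected simple graph with a graph height function (h,Γ). Then for every half-space walk π = (v_0,…,v_n) with n ≥ 1, the canonical decomposition procedure terminates after finitely many steps, producing indices 0 = i_0 < i_1 < … < i_k = n with k ≥ 1 such that the sub-walk π_j = (v_{i_{j−1}},…,v_{i_j}) is a bridge for every odd j and a reversed bridge for every even j, the span of π_j equals a_j for every j, and the spans satisfy a_1 > a_2 > … > a_k > 0. -/
open Filter Finset

noncomputable section

variable {V : Type*}

/-- The span of the sub-walk of `w` between indices `i₀` and `i₁`. -/
noncomputable def segSpan {V : Type*} (h : V → ℤ) (w : ℕ → V) (i₀ i₁ : ℕ) : ℤ :=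
  ((insert i₀ (Finset.Icc i₀ i₁)).sup' (Finset.insert_nonempty _ _) fun i => h (w i)) -
    ((insert i₀ (Finset.Icc i₀ i₁)).inf' (Finset.insert_nonempty _ _) fun i => h (w i))


namespace S3Aux

variable {V : Type*}

def SS (n p : ℕ) : Finset ℕ := insert p (Finset.Icc p n)

lemma SS_nonempty (n p : ℕ) : (SS n p).Nonempty := Finset.insert_nonempty _ _

lemma mem_SS {n p i : ℕ} (h1 : p ≤ i) (h2 : i ≤ n) : i ∈ SS n p := by
  simp [SS, Finset.mem_Icc]; omega

lemma SS_bounds {n p i : ℕ} (hp : p ≤ n) (hi : i ∈ SS n p) : p ≤ i ∧ i ≤ n := by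
  simp [SS, Finset.mem_Icc] at hi; omega

noncomputable def AA (h : V → ℤ) (n : ℕ) (w : ℕ → V) (p : ℕ) : ℤ :=
  (SS n p).sup' (SS_nonempty n p) fun i => |h (w i) - h (w p)|

lemma le_AA (h : V → ℤ) (n : ℕ) (w : ℕ → V) {p i : ℕ} (h1 : p ≤ i) (h2 : i ≤ n) :
    |h (w i) - h (w p)| ≤ AA h n w p :=
  Finset.le_sup' (fun i => |h (w i) - h (w p)|) (mem_SS h1 h2)

noncomputable def nxt (h : V → ℤ) (n : ℕ) (w : ℕ → V) (p : ℕ) : ℕ :=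
  ((SS n p).filter fun i => |h (w i) - h (w p)| = AA h n w p).max' (by
    obtain ⟨b, hb, he⟩ := Finset.exists_mem_eq_sup' (SS_nonempty n p)
      (fun i => |h (w i) - h (w p)|)
    exact ⟨b, Finset.mem_filter.2 ⟨hb, he.symm⟩⟩)

lemma nxt_mem (h : V → ℤ) (n : ℕ) (w : ℕ → V) (p : ℕ) :
    nxt h n w p ∈ SS n p ∧ |h (w (nxt h n w p)) - h (w p)| = AA h n w p := by
  have := Finset.max'_mem ((SS n p).filter fun i => |h (w i) - h (w p)| = AA h n w p)
    (by
      obtain ⟨b, hb, he⟩ := Finset.exists_mem_eq_sup' (SS_nonempty n p)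
        (fun i => |h (w i) - h (w p)|)
      exact ⟨b, Finset.mem_filter.2 ⟨hb, he.symm⟩⟩)
  rw [Finset.mem_filter] at this
  exact this

lemma nxt_ge (h : V → ℤ) (n : ℕ) (w : ℕ → V) (p : ℕ) : p ≤ nxt h n w p := by
  have := (nxt_mem h n w p).1
  simp [SS, Finset.mem_Icc] at this; omega

lemma nxt_le (h : V → ℤ) (n : ℕ) (w : ℕ → V) {p : ℕ} (hp : p ≤ n) : nxt h n w p ≤ n :=
  (SS_bounds hp (nxt_mem h n w p).1).2

lemma lt_AA_of_nxt_lt (h : V → ℤ) (n : ℕ) (w : ℕ → V) {p i : ℕ}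
    (h1 : nxt h n w p < i) (h2 : i ≤ n) : |h (w i) - h (w p)| < AA h n w p := by
  have hp : p ≤ i := le_trans (nxt_ge h n w p) (le_of_lt h1)
  have hle := le_AA h n w hp h2
  rcases lt_or_eq_of_le hle with hlt | heq
  · exact hlt
  · exfalso
    have hmem : i ∈ (SS n p).filter fun j => |h (w j) - h (w p)| = AA h n w p :=
      Finset.mem_filter.2 ⟨mem_SS hp h2, heq⟩
    have hle2 : i ≤ nxt h n w p := Finset.le_max' _ i hmem
    omega

lemma main_up (h : V → ℤ) (n : ℕ) (w : ℕ → V) (p : ℕ) (hpn : p < n)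
    (hup : ∀ i, p < i → i ≤ n → h (w p) < h (w i)) :
    p < nxt h n w p ∧ nxt h n w p ≤ n ∧
    AA h n w p = h (w (nxt h n w p)) - h (w p) ∧ 0 < AA h n w p ∧
    (∀ i, p ≤ i → i ≤ n → h (w i) ≤ h (w (nxt h n w p))) ∧
    (∀ i, nxt h n w p < i → i ≤ n → h (w i) < h (w (nxt h n w p))) := by
  have hqmem := nxt_mem h n w p
  have hApos : 0 < AA h n w p := by
    have h1 := le_AA h n w (le_of_lt hpn) (le_refl n)
    have h2 := hup n hpn (le_refl n)
    have := abs_nonneg (h (w n) - h (w p))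
    calc (0:ℤ) < h (w n) - h (w p) := by omega
    _ ≤ |h (w n) - h (w p)| := le_abs_self _
    _ ≤ _ := h1
  have hqn : (nxt h n w p) ≤ n := nxt_le h n w (le_of_lt hpn)
  have hqne : (nxt h n w p) ≠ p := by
    intro he
    rw [he] at hqmem
    simp at hqmem
    omega
  have hpq : p < (nxt h n w p) := lt_of_le_of_ne (nxt_ge h n w p) (Ne.symm hqne)
  have hqval : h (w p) < h (w (nxt h n w p)) := hup (nxt h n w p) hpq hqn
  have hA : AA h n w p = h (w (nxt h n w p)) - h (w p) := by
    rw [← hqmem.2, abs_of_pos (by omega)]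
  refine ⟨hpq, hqn, hA, hApos, ?_, ?_⟩
  · intro i hi1 hi2
    have := le_AA h n w hi1 hi2
    have := le_abs_self (h (w i) - h (w p))
    omega
  · intro i hi1 hi2
    have := lt_AA_of_nxt_lt h n w hi1 hi2
    have := le_abs_self (h (w i) - h (w p))
    omega

lemma main_down (h : V → ℤ) (n : ℕ) (w : ℕ → V) (p : ℕ) (hpn : p < n)
    (hdown : ∀ i, p < i → i ≤ n → h (w i) < h (w p)) :
    p < nxt h n w p ∧ nxt h n w p ≤ n ∧
    AA h n w p = h (w p) - h (w (nxt h n w p)) ∧ 0 < AA h n w p ∧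
    (∀ i, p ≤ i → i ≤ n → h (w (nxt h n w p)) ≤ h (w i)) ∧
    (∀ i, nxt h n w p < i → i ≤ n → h (w (nxt h n w p)) < h (w i)) := by
  have hqmem := nxt_mem h n w p
  have hApos : 0 < AA h n w p := by
    have h1 := le_AA h n w (le_of_lt hpn) (le_refl n)
    have h2 := hdown n hpn (le_refl n)
    calc (0:ℤ) < h (w p) - h (w n) := by omega
    _ ≤ |h (w n) - h (w p)| := by rw [abs_sub_comm]; exact le_abs_self _
    _ ≤ _ := h1
  have hqn : (nxt h n w p) ≤ n := nxt_le h n w (le_of_lt hpn)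
  have hqne : (nxt h n w p) ≠ p := by
    intro he
    rw [he] at hqmem
    simp at hqmem
    omega
  have hpq : p < (nxt h n w p) := lt_of_le_of_ne (nxt_ge h n w p) (Ne.symm hqne)
  have hqval : h (w (nxt h n w p)) < h (w p) := hdown (nxt h n w p) hpq hqn
  have hA : AA h n w p = h (w p) - h (w (nxt h n w p)) := by
    rw [← hqmem.2, abs_sub_comm, abs_of_pos (by omega)]
  refine ⟨hpq, hqn, hA, hApos, ?_, ?_⟩
  · intro i hi1 hi2
    have := le_AA h n w hi1 hi2
    have := neg_abs_le (h (w i) - h (w p))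
    omega
  · intro i hi1 hi2
    have := lt_AA_of_nxt_lt h n w hi1 hi2
    have := neg_abs_le (h (w i) - h (w p))
    omega

noncomputable def idxF (h : V → ℤ) (n : ℕ) (w : ℕ → V) : ℕ → ℕ
  | 0 => 0
  | j + 1 => nxt h n w (idxF h n w j)

lemma segSpan_aux (h : V → ℤ) (w : ℕ → V) (p q x y : ℕ)
    (hx : x ∈ insert p (Finset.Icc p q)) (hy : y ∈ insert p (Finset.Icc p q))
    (hmax : ∀ i ∈ insert p (Finset.Icc p q), h (w i) ≤ h (w x))
    (hmin : ∀ i ∈ insert p (Finset.Icc p q), h (w y) ≤ h (w i)) :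
    ((insert p (Finset.Icc p q)).sup' (Finset.insert_nonempty _ _) fun i => h (w i)) -
      ((insert p (Finset.Icc p q)).inf' (Finset.insert_nonempty _ _) fun i => h (w i)) =
      h (w x) - h (w y) := by
  have h1 : ((insert p (Finset.Icc p q)).sup' (Finset.insert_nonempty _ _) fun i => h (w i))
      = h (w x) :=
    le_antisymm (Finset.sup'_le _ _ hmax) (Finset.le_sup' (fun i => h (w i)) hx)
  have h2 : ((insert p (Finset.Icc p q)).inf' (Finset.insert_nonempty _ _) fun i => h (w i))
      = h (w y) :=
    le_antisymm (Finset.inf'_le (fun i => h (w i)) hy) (Finset.le_inf' _ _ hmin)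
  rw [h1, h2]

end S3Aux

/-- Every half-space walk of length `n ≥ 1` has a (finite) canonical
decomposition `0 = i₀ < i₁ < … < i_k = n` into an alternating sequence of bridges
(odd `j`) and reversed bridges (even `j`) whose spans satisfy `a₁ > a₂ > … > a_k > 0`. -/
theorem statement_3 {V : Type*} (G : SimpleGraph V)
    (hinf : Infinite V) (hlf : ∀ v : V, (G.neighborSet v).Finite) (hconn : G.Connected)
    (h : V → ℤ) (Γ : Subgroup (G ≃g G)) (hghf : IsGraphHeightFunction G h Γ)
    (n : ℕ) (hn : 1 ≤ n) (v : V) (w : ℕ → V) (hw : IsHSWFrom G h n v w) :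
    ∃ k, 1 ≤ k ∧ ∃ (a : ℕ → ℤ) (idx : ℕ → ℕ),
      IsCanonicalDecomp h n w k a idx ∧
      (∀ j, 1 ≤ j → j ≤ k → Odd j → ∀ i, idx (j - 1) < i → i ≤ idx j →
        h (w (idx (j - 1))) < h (w i) ∧ h (w i) ≤ h (w (idx j))) ∧
      (∀ j, 1 ≤ j → j ≤ k → Even j → ∀ i, idx (j - 1) < i → i ≤ idx j →
        h (w (idx (j - 1))) > h (w i) ∧ h (w i) ≥ h (w (idx j))) ∧
      (∀ j, 1 ≤ j → j ≤ k → segSpan h w (idx (j - 1)) (idx j) = a j) ∧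
      (∀ j, 1 ≤ j → j < k → a (j + 1) < a j) ∧ 0 < a k := by
  classical
  have hhsw : ∀ i, 1 ≤ i → i ≤ n → h (w 0) < h (w i) := hw.2
  set idx := S3Aux.idxF h n w with hidx
  have hidx0 : idx 0 = 0 := rfl
  have hidxS : ∀ j, idx (j + 1) = S3Aux.nxt h n w (idx j) := fun _ => rfl
  have hOdd_notEven : ∀ m : ℕ, Odd m → ¬ Even m := by
    rintro m ⟨x, hx⟩ ⟨y, hy⟩; omega
  have hparodd : ∀ j : ℕ, 1 ≤ j → Odd j → Even (j - 1) := by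
    rintro j h1 ⟨m, hm⟩; exact ⟨m, by omega⟩
  have hpareven : ∀ j : ℕ, 1 ≤ j → Even j → ¬ Even (j - 1) := by
    rintro j h1 ⟨m, hm⟩ ⟨l, hl⟩; omega
  have hidx_le : ∀ j, idx j ≤ n := by
    intro j
    induction j with
    | zero => rw [hidx0]; omega
    | succ j ih => rw [hidxS j]; exact S3Aux.nxt_le h n w ih
  have state : ∀ j, (Even j → ∀ i, idx j < i → i ≤ n → h (w (idx j)) < h (w i)) ∧
      (¬ Even j → ∀ i, idx j < i → i ≤ n → h (w i) < h (w (idx j))) := by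
    intro j
    induction j with
    | zero =>
      refine ⟨fun _ i hi1 hi2 => ?_, fun he => (he Even.zero).elim⟩
      simp only [hidx0] at hi1 ⊢
      exact hhsw i hi1 hi2
    | succ j ih =>
      rcases lt_or_ge (idx j) n with hjn | hjn
      · rcases Nat.even_or_odd j with hje | hjo
        · have hm := S3Aux.main_up h n w (idx j) hjn (ih.1 hje)
          have hodd : ¬ Even (j + 1) := by
            rintro ⟨x, hx⟩; rcases hje with ⟨y, hy⟩; omega
          refine ⟨fun he => (hodd he).elim, fun _ i h1 h2 => ?_⟩
          rw [hidxS j] at h1 ⊢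
          exact hm.2.2.2.2.2 i h1 h2
        · have hm := S3Aux.main_down h n w (idx j) hjn (ih.2 (hOdd_notEven j hjo))
          refine ⟨fun _ i h1 h2 => ?_, fun hne => ?_⟩
          · rw [hidxS j] at h1 ⊢
            exact hm.2.2.2.2.2 i h1 h2
          · exfalso; rcases hjo with ⟨x, hx⟩
            exact hne ⟨x + 1, by omega⟩
      · have hjeq : idx j = n := le_antisymm (hidx_le j) hjn
        have hSeq : idx (j + 1) = n := by
          have h1 := hidx_le (j + 1)
          have h2 : idx j ≤ idx (j + 1) := by
            rw [hidxS j]; exact S3Aux.nxt_ge h n w (idx j)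
          omega
        constructor <;>
          exact fun _ i h1 h2 => absurd ((hSeq ▸ h1).trans_le h2) (lt_irrefl n)
  have hstep : ∀ j, idx j < n → idx j < idx (j + 1) := by
    intro j hj
    rw [hidxS j]
    rcases Nat.even_or_odd j with hje | hjo
    · exact (S3Aux.main_up h n w (idx j) hj ((state j).1 hje)).1
    · exact (S3Aux.main_down h n w (idx j) hj ((state j).2 (hOdd_notEven j hjo))).1
  have hreach : ∃ j, idx j = n := by
    have key : ∀ j, idx j = n ∨ j ≤ idx j := by
      intro j
      induction j with
      | zero => right; omega
      | succ j ih =>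
        have h2 : idx j ≤ idx (j + 1) := by
          rw [hidxS j]; exact S3Aux.nxt_ge h n w (idx j)
        rcases ih with he | hle
        · left; have h1 := hidx_le (j + 1); omega
        · rcases lt_or_ge (idx j) n with hj | hj
          · right; have := hstep j hj; omega
          · left
            have h1 := hidx_le (j + 1)
            have h0 := hidx_le j
            omega
    rcases key n with he | hle
    · exact ⟨n, he⟩
    · exact ⟨n, le_antisymm (hidx_le n) hle⟩
  set k := Nat.find hreach with hkdef
  have hk : idx k = n := Nat.find_spec hreach
  have hkmin : ∀ j, j < k → idx j < n := fun j hj =>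
    lt_of_le_of_ne (hidx_le j) (Nat.find_min hreach hj)
  have hk1 : 1 ≤ k := by
    by_contra hc
    have hk0 : k = 0 := by omega
    rw [hk0, hidx0] at hk
    omega
  set a : ℕ → ℤ := fun j => S3Aux.AA h n w (idx (j - 1)) with ha
  have haj : ∀ j, a j = S3Aux.AA h n w (idx (j - 1)) := fun _ => rfl
  have hqeq : ∀ j, 1 ≤ j → S3Aux.nxt h n w (idx (j - 1)) = idx j := by
    intro j h1
    rw [← hidxS (j - 1)]
    congr 1
    omega
  have keyOdd : ∀ j, 1 ≤ j → j ≤ k → Odd j →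
      idx (j - 1) < idx j ∧ idx j ≤ n ∧
      a j = h (w (idx j)) - h (w (idx (j - 1))) ∧ 0 < a j ∧
      (∀ i, idx (j - 1) ≤ i → i ≤ n → h (w i) ≤ h (w (idx j))) ∧
      (∀ i, idx j < i → i ≤ n → h (w i) < h (w (idx j))) := by
    intro j h1 h2 hodd
    have hm := S3Aux.main_up h n w (idx (j - 1)) (hkmin _ (by omega))
      ((state (j - 1)).1 (hparodd j h1 hodd))
    rw [hqeq j h1] at hm
    rw [haj]
    exact hm
  have keyEven : ∀ j, 1 ≤ j → j ≤ k → Even j →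
      idx (j - 1) < idx j ∧ idx j ≤ n ∧
      a j = h (w (idx (j - 1))) - h (w (idx j)) ∧ 0 < a j ∧
      (∀ i, idx (j - 1) ≤ i → i ≤ n → h (w (idx j)) ≤ h (w i)) ∧
      (∀ i, idx j < i → i ≤ n → h (w (idx j)) < h (w i)) := by
    intro j h1 h2 heven
    have hm := S3Aux.main_down h n w (idx (j - 1)) (hkmin _ (by omega))
      ((state (j - 1)).2 (hpareven j h1 heven))
    rw [hqeq j h1] at hm
    rw [haj]
    exact hm
  refine ⟨k, hk1, a, idx, ⟨hidx0, hk, ?_⟩, ?_, ?_, ?_, ?_, ?_⟩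
  · -- canonical decomposition per-j conditions
    intro j h1 h2
    have hb : ∀ i, idx (j - 1) ≤ i → i ≤ n → |h (w i) - h (w (idx (j - 1)))| ≤ a j := by
      intro i hi1 hi2; rw [haj j]; exact S3Aux.le_AA h n w hi1 hi2
    have hs : ∀ i, idx j < i → i ≤ n → |h (w i) - h (w (idx (j - 1)))| < a j := by
      intro i hi1 hi2; rw [haj j]
      exact S3Aux.lt_AA_of_nxt_lt h n w (by rw [hqeq j h1]; exact hi1) hi2
    rcases Nat.even_or_odd j with hje | hjo
    · obtain ⟨hlt, hle, hA, hApos, -, -⟩ := keyEven j h1 h2 hje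
      exact ⟨hlt, hle, by rw [abs_sub_comm, abs_of_pos (by omega)]; omega, hb, hs⟩
    · obtain ⟨hlt, hle, hA, hApos, -, -⟩ := keyOdd j h1 h2 hjo
      exact ⟨hlt, hle, by rw [abs_of_pos (by omega)]; omega, hb, hs⟩
  · -- odd pieces are bridges
    intro j h1 h2 hodd i hi1 hi2
    obtain ⟨hlt, hle, -, -, hmax, -⟩ := keyOdd j h1 h2 hodd
    exact ⟨(state (j - 1)).1 (hparodd j h1 hodd) i hi1 (le_trans hi2 hle),
      hmax i (by omega) (le_trans hi2 hle)⟩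
  · -- even pieces are reversed bridges
    intro j h1 h2 heven i hi1 hi2
    obtain ⟨hlt, hle, -, -, hmin, -⟩ := keyEven j h1 h2 heven
    exact ⟨(state (j - 1)).2 (hpareven j h1 heven) i hi1 (le_trans hi2 hle),
      hmin i (by omega) (le_trans hi2 hle)⟩
  · -- spans of the pieces
    intro j h1 h2
    rcases Nat.even_or_odd j with hje | hjo
    · obtain ⟨hlt, hle, hA, -, hmin, -⟩ := keyEven j h1 h2 hje
      have hstate := (state (j - 1)).2 (hpareven j h1 hje)
      have hmemb : ∀ i ∈ insert (idx (j - 1)) (Finset.Icc (idx (j - 1)) (idx j)),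
          idx (j - 1) ≤ i ∧ i ≤ n := by
        intro i hi
        rcases Finset.mem_insert.1 hi with he | hm
        · subst he; exact ⟨le_refl _, by omega⟩
        · rw [Finset.mem_Icc] at hm; exact ⟨hm.1, le_trans hm.2 hle⟩
      have hres : segSpan h w (idx (j - 1)) (idx j)
          = h (w (idx (j - 1))) - h (w (idx j)) := by
        refine S3Aux.segSpan_aux h w _ _ _ _ (Finset.mem_insert_self _ _)
          (Finset.mem_insert.2 (Or.inr (Finset.mem_Icc.2 ⟨le_of_lt hlt, le_refl _⟩)))
          (fun i hi => ?_) (fun i hi => hmin i (hmemb i hi).1 (hmemb i hi).2)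
        rcases eq_or_lt_of_le (hmemb i hi).1 with he | hlt2
        · rw [← he]
        · exact le_of_lt (hstate i hlt2 (hmemb i hi).2)
      rw [hres]; omega
    · obtain ⟨hlt, hle, hA, -, hmax, -⟩ := keyOdd j h1 h2 hjo
      have hstate := (state (j - 1)).1 (hparodd j h1 hjo)
      have hmemb : ∀ i ∈ insert (idx (j - 1)) (Finset.Icc (idx (j - 1)) (idx j)),
          idx (j - 1) ≤ i ∧ i ≤ n := by
        intro i hi
        rcases Finset.mem_insert.1 hi with he | hm
        · subst he; exact ⟨le_refl _, by omega⟩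
        · rw [Finset.mem_Icc] at hm; exact ⟨hm.1, le_trans hm.2 hle⟩
      have hres : segSpan h w (idx (j - 1)) (idx j)
          = h (w (idx j)) - h (w (idx (j - 1))) := by
        refine S3Aux.segSpan_aux h w _ _ _ _
          (Finset.mem_insert.2 (Or.inr (Finset.mem_Icc.2 ⟨le_of_lt hlt, le_refl _⟩)))
          (Finset.mem_insert_self _ _)
          (fun i hi => hmax i (hmemb i hi).1 (hmemb i hi).2) (fun i hi => ?_)
        rcases eq_or_lt_of_le (hmemb i hi).1 with he | hlt2
        · rw [← he]
        · exact le_of_lt (hstate i hlt2 (hmemb i hi).2)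
      rw [hres]; omega
  · -- strictly decreasing spans
    intro j h1 h2
    have e1 : (j + 1) - 1 = j := by omega
    rcases Nat.even_or_odd j with hje | hjo
    · obtain ⟨hlt, hle, hA, -, -, -⟩ := keyEven j h1 (by omega) hje
      have hodd1 : Odd (j + 1) := by rcases hje with ⟨x, hx⟩; exact ⟨x, by omega⟩
      obtain ⟨hlt2, hle2, hA2, -, -, -⟩ := keyOdd (j + 1) (by omega) (by omega) hodd1
      rw [e1] at hlt2 hA2
      have hdown := (state (j - 1)).2 (hpareven j h1 hje)
      have hr : h (w (idx (j + 1))) < h (w (idx (j - 1))) :=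
        hdown (idx (j + 1)) (by omega) hle2
      omega
    · obtain ⟨hlt, hle, hA, -, -, -⟩ := keyOdd j h1 (by omega) hjo
      have heven1 : Even (j + 1) := by rcases hjo with ⟨x, hx⟩; exact ⟨x + 1, by omega⟩
      obtain ⟨hlt2, hle2, hA2, -, -, -⟩ := keyEven (j + 1) (by omega) (by omega) heven1
      rw [e1] at hlt2 hA2
      have hup := (state (j - 1)).1 (hparodd j h1 hjo)
      have hr : h (w (idx (j - 1))) < h (w (idx (j + 1))) :=
        hup (idx (j + 1)) (by omega) hle2
      omega
  · -- last span positive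
    rcases Nat.even_or_odd k with hke | hko
    · exact (keyEven k hk1 (le_refl k) hke).2.2.2.1
    · exact (keyOdd k hk1 (le_refl k) hko).2.2.2.1
end
end

section
/- Let X be an infinite, locally finite, connected simple graph with a graph height function (h,Γ) such that Γ acts transitively on X. Then for all n, k ≥ 1 and all integers a_1 > a_2 > … > a_k > 0: h_n(a_1,…,a_k) ≤ Σ_{m=0}^{n} b_m(a_1 + a_3 + …) · b̄_{n−m}(a_2 + a_4 + …), where a_1 + a_3 + … is the sum of the odd-indexed spans and a_2 + a_4 + … the sum of the even-indexed spans. -/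
open Filter Finset

noncomputable section

variable {V : Type*}

/-!
Cut a half-space walk at the last vertex of maximal height. The first piece is a bridge of
span `a₁`. The rest stays strictly below that vertex, so after an automorphism moves it back to
the start it is a half-space walk for `-h`, and its canonical decomposition has spans
`a₂, …, a_k`. Induction on `k`, swapping `h` and `-h`, bounds `h_n(a₁, …, a_k)` by a
convolution of `b(a₁)`, `b̄(a₂ + a₄ + …)` and `b(a₃ + a₅ + …)`. Gluing a bridge to a translated
bridge gives a bridge, and the heights tell where the cut was, so `∑ b_m(s) b_{M-m}(t) ≤ b_M(s+t)`.
This inequality merges the two bridge factors. Both the cut and the gluing are injective, which is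
what turns these constructions into inequalities between counts.
-/

def cauchyProduct {R : Type*} [CommSemiring R] (f g : ℕ → R) (n : ℕ) : R :=
  ∑ m ∈ range (n + 1), f m * g (n - m)

section CauchyProduct

variable {R : Type*} [CommSemiring R]

theorem PowerSeries.mk_cauchyProduct (f g : ℕ → R) :
    PowerSeries.mk (cauchyProduct f g) = PowerSeries.mk f * PowerSeries.mk g := by
  ext n
  simp [cauchyProduct, PowerSeries.coeff_mul, Nat.sum_antidiagonal_eq_sum_range_succ_mk]

theorem cauchyProduct_comm (f g : ℕ → R) : cauchyProduct f g = cauchyProduct g f := by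
  funext n
  simpa using congrArg (PowerSeries.coeff n)
    (by rw [PowerSeries.mk_cauchyProduct, PowerSeries.mk_cauchyProduct, mul_comm] :
      PowerSeries.mk (cauchyProduct f g) = PowerSeries.mk (cauchyProduct g f))

theorem cauchyProduct_assoc (f g k : ℕ → R) :
    cauchyProduct (cauchyProduct f g) k = cauchyProduct f (cauchyProduct g k) := by
  funext n
  simpa using congrArg (PowerSeries.coeff n)
    (by simp only [PowerSeries.mk_cauchyProduct, mul_assoc] :
      PowerSeries.mk (cauchyProduct (cauchyProduct f g) k) =
        PowerSeries.mk (cauchyProduct f (cauchyProduct g k)))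

theorem cauchyProduct_mono [PartialOrder R] [CanonicallyOrderedAdd R] [IsOrderedRing R]
    {f f' g g' : ℕ → R} (hf : ∀ m, f m ≤ f' m) (hg : ∀ m, g m ≤ g' m) (n : ℕ) :
    cauchyProduct f g n ≤ cauchyProduct f' g' n :=
  sum_le_sum fun m _ => mul_le_mul' (hf m) (hg (n - m))

end CauchyProduct

theorem card_sigma_fin_prod_eq_cauchyProduct (A B : ℕ → Type*) [∀ m, Finite (A m)]
    [∀ m, Finite (B m)] (n : ℕ) :
    Nat.card (Σ m : Fin (n + 1), A m × B (n - m)) =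
      cauchyProduct (fun m => Nat.card (A m)) (fun m => Nat.card (B m)) n := by
  rw [Nat.card_sigma, cauchyProduct, ← Fin.sum_univ_eq_sum_range]
  simp only [Nat.card_prod]

def walkTake (w : ℕ → V) (m : ℕ) : ℕ → V := fun i => w (min i m)

def walkDrop (w : ℕ → V) (m n : ℕ) : ℕ → V := fun i => w (min (m + i) n)

def walkAppend (w₁ : ℕ → V) (m : ℕ) (w₂ : ℕ → V) : ℕ → V :=
  fun i => if i ≤ m then w₁ i else w₂ (i - m)

section Walks

variable {G : SimpleGraph V} {n m : ℕ} {v : V} {w : ℕ → V}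

theorem IsWalkFrom.ext {v' : V} {w' : ℕ → V} (hw : IsWalkFrom G n v w)
    (hw' : IsWalkFrom G n v' w') (heq : ∀ i ≤ n, w i = w' i) : w = w' := by
  funext i
  rcases le_or_gt i n with hi | hi
  · exact heq i hi
  · rw [hw.2.2 i hi.le, hw'.2.2 i hi.le, heq n le_rfl]

theorem IsWalkFrom.take (hw : IsWalkFrom G n v w) (hm : m ≤ n) :
    IsWalkFrom G m v (walkTake w m) := by
  obtain ⟨h0, hadj, -⟩ := hw
  refine ⟨by simp [walkTake, h0], fun i hi => ?_, fun i hi => by simp [walkTake, hi]⟩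
  simpa [walkTake, hi.le, Nat.succ_le_of_lt hi] using hadj i (by omega)

theorem IsWalkFrom.drop (hw : IsWalkFrom G n v w) (hm : m ≤ n) :
    IsWalkFrom G (n - m) (w m) (walkDrop w m n) := by
  obtain ⟨-, hadj, -⟩ := hw
  refine ⟨by simp [walkDrop, hm], fun i hi => ?_, fun i hi => ?_⟩
  · simpa [walkDrop, show m + i ≤ n by omega, show m + i + 1 ≤ n by omega, ← add_assoc]
      using hadj (m + i) (by omega)
  · simp [walkDrop, show n ≤ m + i by omega, show m + (n - m) = n by omega]

theorem walkAppend_of_le (w₁ w₂ : ℕ → V) {i : ℕ} (hi : i ≤ m) :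
    walkAppend w₁ m w₂ i = w₁ i := if_pos hi

theorem walkAppend_of_ge {w₁ w₂ : ℕ → V} (h0 : w₂ 0 = w₁ m) {i : ℕ} (hi : m ≤ i) :
    walkAppend w₁ m w₂ i = w₂ (i - m) := by
  rcases hi.eq_or_lt with rfl | hi
  · simp [walkAppend, h0]
  · exact if_neg (by omega)

theorem IsWalkFrom.append {w₁ w₂ : ℕ → V} (h₁ : IsWalkFrom G m v w₁)
    (h₂ : IsWalkFrom G (n - m) (w₁ m) w₂) (hm : m ≤ n) :
    IsWalkFrom G n v (walkAppend w₁ m w₂) := by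
  have hr : ∀ i, m ≤ i → walkAppend w₁ m w₂ i = w₂ (i - m) := fun i => walkAppend_of_ge h₂.1
  refine ⟨by rw [walkAppend_of_le _ _ (Nat.zero_le m), h₁.1], fun i hi => ?_, fun i hi => ?_⟩
  · rcases lt_or_ge i m with him | him
    · rw [walkAppend_of_le _ _ him.le, walkAppend_of_le _ _ him]
      exact h₁.2.1 i him
    · rw [hr i him, hr (i + 1) (by omega), show i + 1 - m = i - m + 1 by omega]
      exact h₂.2.1 (i - m) (by omega)
  · rw [hr i (by omega), hr n hm, h₂.2.2 (i - m) (by omega)]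

theorem walkTake_walkAppend {w₁ : ℕ → V} (h₁ : IsWalkFrom G m v w₁) (w₂ : ℕ → V) :
    walkTake (walkAppend w₁ m w₂) m = w₁ := by
  funext i
  rw [walkTake, walkAppend_of_le _ _ (min_le_right i m)]
  rcases le_total i m with hi | hi
  · rw [min_eq_left hi]
  · rw [min_eq_right hi, h₁.2.2 i hi]

theorem walkDrop_walkAppend {w₁ w₂ : ℕ → V} (h₂ : IsWalkFrom G (n - m) (w₁ m) w₂)
    (hm : m ≤ n) : walkDrop (walkAppend w₁ m w₂) m n = w₂ := by
  funext i
  rw [walkDrop, walkAppend_of_ge h₂.1 (by omega)]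
  rcases le_total (m + i) n with hi | hi
  · rw [min_eq_left hi, Nat.add_sub_cancel_left]
  · rw [min_eq_right hi, h₂.2.2 i (by omega)]

theorem IsWalkFrom.walkAppend_walkTake_walkDrop (hw : IsWalkFrom G n v w) (hm : m ≤ n) :
    walkAppend (walkTake w m) m (walkDrop w m n) = w := by
  funext i
  rcases le_or_gt i m with hi | hi
  · rw [walkAppend_of_le _ _ hi, walkTake, min_eq_left hi]
  · rw [walkAppend_of_ge (by simp [walkDrop, walkTake, hm]) hi.le, walkDrop,
      Nat.add_sub_cancel' hi.le]
    rcases le_total i n with hin | hin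
    · rw [min_eq_left hin]
    · rw [min_eq_right hin, hw.2.2 i hin]

theorem IsWalkFrom.eq_of_walkTake_eq_of_walkDrop_eq {v' : V} {w' : ℕ → V}
    (hw : IsWalkFrom G n v w) (hw' : IsWalkFrom G n v' w') (hm : m ≤ n)
    (htake : walkTake w m = walkTake w' m) (hdrop : walkDrop w m n = walkDrop w' m n) :
    w = w' := by
  rw [← hw.walkAppend_walkTake_walkDrop hm, htake, hdrop, hw'.walkAppend_walkTake_walkDrop hm]

theorem setOf_isWalkFrom_finite (hlf : ∀ v : V, (G.neighborSet v).Finite) (n : ℕ) (v : V) :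
    {w | IsWalkFrom G n v w}.Finite := by
  induction n with
  | zero =>
    refine (Set.finite_singleton fun _ => v).subset fun w hw => ?_
    exact hw.ext (v' := v) ⟨rfl, fun _ hi => absurd hi (Nat.not_lt_zero _), fun _ _ => rfl⟩
      fun i hi => by rw [Nat.le_zero.mp hi, hw.1]
  | succ n ih =>
    refine Set.Finite.of_finite_image (f := fun w => (walkTake w n, w (n + 1))) ?_ ?_
    · refine (ih.biUnion fun w' _ => (Set.finite_singleton w').prod (hlf (w' n))).subset ?_
      rintro _ ⟨w, hw, rfl⟩
      refine Set.mem_biUnion (hw.take n.le_succ) ⟨rfl, ?_⟩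
      simpa [walkTake] using hw.2.1 n n.lt_succ_self
    · intro w hw w' hw' heq
      simp only [Prod.mk.injEq] at heq
      refine IsWalkFrom.ext hw hw' fun i hi => ?_
      rcases hi.lt_or_eq with hi | rfl
      · simpa [walkTake, Nat.le_of_lt_succ hi] using congrFun heq.1 i
      · exact heq.2

theorem IsSAWFrom.take (hw : IsSAWFrom G n v w) (hm : m ≤ n) :
    IsSAWFrom G m v (walkTake w m) := by
  refine ⟨hw.1.take hm, fun i hi j hj hij => ?_⟩
  simp only [Set.mem_Iic] at hi hj
  simp only [walkTake, min_eq_left hi, min_eq_left hj] at hij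
  exact hw.2 (Set.mem_Iic.mpr (hi.trans hm)) (Set.mem_Iic.mpr (hj.trans hm)) hij

theorem IsSAWFrom.drop (hw : IsSAWFrom G n v w) (hm : m ≤ n) :
    IsSAWFrom G (n - m) (w m) (walkDrop w m n) := by
  refine ⟨hw.1.drop hm, fun i hi j hj hij => ?_⟩
  simp only [Set.mem_Iic] at hi hj
  simp only [walkDrop, min_eq_left (show m + i ≤ n by omega),
    min_eq_left (show m + j ≤ n by omega)] at hij
  have := hw.2 (Set.mem_Iic.mpr (show m + i ≤ n by omega))
    (Set.mem_Iic.mpr (show m + j ≤ n by omega)) hij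
  omega

theorem IsSAWFrom.map (hw : IsSAWFrom G n v w) (γ : G ≃g G) :
    IsSAWFrom G n (γ v) (fun i => γ (w i)) :=
  ⟨⟨congrArg γ hw.1.1, fun i hi => γ.map_adj_iff.mpr (hw.1.2.1 i hi),
    fun i hi => congrArg γ (hw.1.2.2 i hi)⟩, fun _ hi _ hj hij => hw.2 hi hj (γ.injective hij)⟩

theorem finite_of_isWalkFrom (hlf : ∀ v : V, (G.neighborSet v).Finite)
    {P : (ℕ → V) → Prop} (hP : ∀ w, P w → IsWalkFrom G n v w) : Finite {w // P w} :=
  ((setOf_isWalkFrom_finite hlf n v).subset hP).to_subtype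

end Walks

def IsHeightTransitive (G : SimpleGraph V) (h : V → ℤ) : Prop :=
  ∀ u u' : V, ∃ γ : G ≃g G, γ u = u' ∧ ∀ x y, h (γ y) - h (γ x) = h y - h x

section Heights

variable {G : SimpleGraph V} {h : V → ℤ} {n m : ℕ} {v : V} {w : ℕ → V}

theorem IsGraphHeightFunction.isHeightTransitive {Γ : Subgroup (G ≃g G)}
    (hghf : IsGraphHeightFunction G h Γ) (htrans : ∀ u v : V, ∃ γ ∈ Γ, γ u = v) :
    IsHeightTransitive G h := fun u u' =>
  let ⟨γ, hγ, hγu⟩ := htrans u u'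
  ⟨γ, hγu, hghf.2.1 γ hγ⟩

theorem neg_apply_sub_neg_apply {γ : V → V} (hγ : ∀ x y, h (γ y) - h (γ x) = h y - h x)
    (x y : V) : (-h) (γ y) - (-h) (γ x) = (-h) y - (-h) x := by
  simp only [Pi.neg_apply]
  linarith [hγ x y]

theorem IsHeightTransitive.neg (ht : IsHeightTransitive G h) : IsHeightTransitive G (-h) :=
  fun u u' =>
  let ⟨γ, hγu, hγ⟩ := ht u u'
  ⟨γ, hγu, neg_apply_sub_neg_apply hγ⟩

theorem walkSpan_eq_of {top bot : ℕ} (htop : top ≤ n) (hbot : bot ≤ n)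
    (hle : ∀ i ≤ n, h (w i) ≤ h (w top)) (hge : ∀ i ≤ n, h (w bot) ≤ h (w i)) :
    walkSpan h n w = h (w top) - h (w bot) := by
  rw [walkSpan]
  congr 1
  · exact le_antisymm (sup'_le _ _ fun i hi => hle i (mem_range_succ_iff.mp hi))
      (le_sup' (fun i => h (w i)) (mem_range_succ_iff.mpr htop))
  · exact le_antisymm (inf'_le (fun i => h (w i)) (mem_range_succ_iff.mpr hbot))
      (le_inf' _ _ fun i hi => hge i (mem_range_succ_iff.mp hi))

theorem IsBridgeFrom.height_mem_Icc (hw : IsBridgeFrom G h n v w) {i : ℕ} (hi : i ≤ n) :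
    h (w i) ∈ Set.Icc (h (w 0)) (h (w n)) := by
  rcases Nat.eq_zero_or_pos i with rfl | hi0
  · rcases Nat.eq_zero_or_pos n with rfl | hn0
    · exact ⟨le_rfl, le_rfl⟩
    · exact ⟨le_rfl, (hw.2 n hn0 le_rfl).1.le⟩
  · exact ⟨(hw.2 i hi0 hi).1.le, (hw.2 i hi0 hi).2⟩

theorem IsBridgeFrom.walkSpan_eq (hw : IsBridgeFrom G h n v w) :
    walkSpan h n w = h (w n) - h (w 0) :=
  walkSpan_eq_of le_rfl (Nat.zero_le n) (fun _ hi => (hw.height_mem_Icc hi).2)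
    fun _ hi => (hw.height_mem_Icc hi).1

theorem isRBridgeFrom_iff_isBridgeFrom_neg :
    IsRBridgeFrom G h n v w ↔ IsBridgeFrom G (-h) n v w := by
  simp only [IsRBridgeFrom, IsBridgeFrom, Pi.neg_apply, neg_lt_neg_iff, neg_le_neg_iff,
    gt_iff_lt, ge_iff_le]

theorem rbridgeSpanCount_eq_bridgeSpanCount_neg (s : ℤ) :
    rbridgeSpanCount G h n v s = bridgeSpanCount G (-h) n v s := by
  refine Nat.card_congr (Equiv.subtypeEquivRight fun w => ?_)
  rw [isRBridgeFrom_iff_isBridgeFrom_neg]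
  refine and_congr_right fun hw => ?_
  have hspan : walkSpan h n w = h (w 0) - h (w n) :=
    walkSpan_eq_of (Nat.zero_le n) le_rfl (fun _ hi => neg_le_neg_iff.mp (hw.height_mem_Icc hi).1)
      fun _ hi => neg_le_neg_iff.mp (hw.height_mem_Icc hi).2
  rw [hspan, hw.walkSpan_eq, Pi.neg_apply, Pi.neg_apply, neg_sub_neg]

theorem rbridgeSpanCount_neg (s : ℤ) :
    rbridgeSpanCount G (-h) n v s = bridgeSpanCount G h n v s := by
  rw [rbridgeSpanCount_eq_bridgeSpanCount_neg, neg_neg]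

theorem bridgeSpanCount_zero_zero : bridgeSpanCount G h 0 v 0 = 1 := by
  have hconst : IsBridgeFrom G h 0 v fun _ => v :=
    ⟨⟨⟨rfl, fun _ hi => absurd hi (Nat.not_lt_zero _), fun _ _ => rfl⟩,
      fun i hi j hj _ => by simp_all⟩, fun i hi hi' => absurd (hi.trans hi') (by omega)⟩
  rw [bridgeSpanCount, Nat.card_eq_one_iff_exists]
  refine ⟨⟨_, hconst, by simp [hconst.walkSpan_eq]⟩, fun ⟨w', hw', _⟩ => Subtype.ext ?_⟩
  exact hw'.1.1.ext hconst.1.1 fun i hi => by rw [Nat.le_zero.mp hi, hw'.1.1.1]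

theorem IsBridgeFrom.map (hw : IsBridgeFrom G h n v w) {γ : G ≃g G}
    (hγ : ∀ x y, h (γ y) - h (γ x) = h y - h x) :
    IsBridgeFrom G h n (γ v) (fun i => γ (w i)) :=
  ⟨hw.1.map γ, fun i hi hin => by
    have := hw.2 i hi hin
    constructor <;> linarith [hγ (w 0) (w i), hγ (w i) (w n)]⟩

theorem IsBridgeFrom.height_end (hw : IsBridgeFrom G h n v w) :
    h (w n) = h v + walkSpan h n w := by
  rw [hw.walkSpan_eq, hw.1.1.1]
  ring

theorem IsBridgeFrom.walkSpan_map (hw : IsBridgeFrom G h n v w)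
    {γ : G ≃g G} (hγ : ∀ x y, h (γ y) - h (γ x) = h y - h x) :
    walkSpan h n (fun i => γ (w i)) = walkSpan h n w := by
  rw [(hw.map hγ).walkSpan_eq, hw.walkSpan_eq, hγ]

theorem IsHSWFrom.map (hw : IsHSWFrom G h n v w) {γ : G ≃g G}
    (hγ : ∀ x y, h (γ y) - h (γ x) = h y - h x) :
    IsHSWFrom G h n (γ v) (fun i => γ (w i)) :=
  ⟨hw.1.map γ, fun i hi hin => by linarith [hw.2 i hi hin, hγ (w 0) (w i)]⟩

theorem IsBridgeFrom.append_height_le_iff {w₁ w₂ : ℕ → V} (h₁ : IsBridgeFrom G h m v w₁)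
    (h₂ : IsBridgeFrom G h (n - m) (w₁ m) w₂) {i : ℕ} (hi : i ≤ n) :
    h (walkAppend w₁ m w₂ i) ≤ h (w₁ m) ↔ i ≤ m := by
  constructor
  · intro hle
    by_contra! him
    rw [walkAppend_of_ge h₂.1.1.1 him.le] at hle
    have := (h₂.2 (i - m) (by omega) (by omega)).1
    rw [h₂.1.1.1] at this
    omega
  · intro him
    rw [walkAppend_of_le _ _ him]
    exact (h₁.height_mem_Icc him).2

theorem IsBridgeFrom.append {w₁ w₂ : ℕ → V} (h₁ : IsBridgeFrom G h m v w₁)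
    (h₂ : IsBridgeFrom G h (n - m) (w₁ m) w₂) (hm : m ≤ n) :
    IsBridgeFrom G h n v (walkAppend w₁ m w₂) := by
  have hr : ∀ i, m ≤ i → walkAppend w₁ m w₂ i = w₂ (i - m) :=
    fun i => walkAppend_of_ge h₂.1.1.1
  have hl : ∀ i, i ≤ m → walkAppend w₁ m w₂ i = w₁ i := fun i => walkAppend_of_le w₁ w₂
  have hchar := fun i => h₁.append_height_le_iff h₂ (i := i)
  refine ⟨⟨h₁.1.1.append h₂.1.1 hm, fun i hi j hj hij => ?_⟩, fun i hi hin => ?_⟩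
  · simp only [Set.mem_Iic] at hi hj
    rcases le_or_gt i m with him | him <;> rcases le_or_gt j m with hjm | hjm
    · rw [hl i him, hl j hjm] at hij
      exact h₁.1.2 (Set.mem_Iic.mpr him) (Set.mem_Iic.mpr hjm) hij
    · exact absurd ((hchar j hj).mp (hij ▸ (hchar i hi).mpr him)) (by omega)
    · exact absurd ((hchar i hi).mp (hij ▸ (hchar j hj).mpr hjm)) (by omega)
    · rw [hr i him.le, hr j hjm.le] at hij
      have := h₂.1.2 (Set.mem_Iic.mpr (show i - m ≤ n - m by omega))
        (Set.mem_Iic.mpr (show j - m ≤ n - m by omega)) hij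
      omega
  · rw [hl 0 (Nat.zero_le m), hr n hm]
    have htop := (h₂.height_mem_Icc (le_refl (n - m))).1
    rw [h₂.1.1.1] at htop
    rcases le_or_gt i m with him | him
    · rw [hl i him]
      exact ⟨(h₁.2 i hi him).1, (h₁.height_mem_Icc him).2.trans htop⟩
    · rw [hr i him.le]
      have := h₂.2 (i - m) (by omega) (by omega)
      rw [h₂.1.1.1] at this
      exact ⟨(h₁.height_mem_Icc le_rfl).1.trans_lt this.1, this.2⟩

theorem IsBridgeFrom.walkSpan_append {w₁ w₂ : ℕ → V}
    (h₁ : IsBridgeFrom G h m v w₁) (h₂ : IsBridgeFrom G h (n - m) (w₁ m) w₂) (hm : m ≤ n) :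
    walkSpan h n (walkAppend w₁ m w₂) = walkSpan h m w₁ + walkSpan h (n - m) w₂ := by
  rw [(h₁.append h₂ hm).walkSpan_eq, h₁.walkSpan_eq, h₂.walkSpan_eq, walkAppend_of_le _ _ m.zero_le,
    walkAppend_of_ge h₂.1.1.1 hm, h₂.1.1.1]
  ring

end Heights

section CanonicalDecomp

variable {h h' : V → ℤ} {n k : ℕ} {w w' : ℕ → V} {a : ℕ → ℤ} {idx : ℕ → ℕ}

theorem isCanonicalDecomp_iff : IsCanonicalDecomp h n w k a idx ↔
    idx 0 = 0 ∧ idx k = n ∧ ∀ j < k,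
      idx j < idx (j + 1) ∧ idx (j + 1) ≤ n ∧
      a (j + 1) = |h (w (idx (j + 1))) - h (w (idx j))| ∧
      (∀ i, idx j ≤ i → i ≤ n → |h (w i) - h (w (idx j))| ≤ a (j + 1)) ∧
      (∀ i, idx (j + 1) < i → i ≤ n → |h (w i) - h (w (idx j))| < a (j + 1)) := by
  refine and_congr_right fun _ => and_congr_right fun _ => ⟨fun H j hj => ?_, fun H j hj hjk => ?_⟩
  · simpa using H (j + 1) (by omega) hj
  · obtain ⟨j, rfl⟩ := Nat.exists_eq_add_of_le' hj
    simpa using H j (by omega)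

theorem IsCanonicalDecomp.idx_mono (hd : IsCanonicalDecomp h n w k a idx) {i j : ℕ}
    (hij : i ≤ j) (hjk : j ≤ k) : idx i ≤ idx j := by
  induction j, hij using Nat.le_induction with
  | base => exact le_rfl
  | succ j _ ih =>
    exact (ih (by omega)).trans ((isCanonicalDecomp_iff.mp hd).2.2 j (by omega)).1.le

theorem IsCanonicalDecomp.of_abs_sub_eq (hd : IsCanonicalDecomp h n w k a idx)
    (hw : ∀ p ≤ n, ∀ q ≤ n, |h' (w' p) - h' (w' q)| = |h (w p) - h (w q)|) :
    IsCanonicalDecomp h' n w' k a idx := by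
  obtain ⟨h0, hk, H⟩ := isCanonicalDecomp_iff.mp hd
  refine isCanonicalDecomp_iff.mpr ⟨h0, hk, fun j hj => ?_⟩
  obtain ⟨hlt, hle, ha, hmax, hstrict⟩ := H j hj
  refine ⟨hlt, hle, by rw [hw _ hle _ (by omega), ha], fun i hi hin => ?_, fun i hi hin => ?_⟩
  · rw [hw _ hin _ (by omega)]; exact hmax i hi hin
  · rw [hw _ hin _ (by omega)]; exact hstrict i hi hin

theorem IsCanonicalDecomp.tail (hd : IsCanonicalDecomp h n w (k + 1) a idx) :
    IsCanonicalDecomp h (n - idx 1) (walkDrop w (idx 1) n) k (fun j => a (j + 1))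
      (fun j => idx (j + 1) - idx 1) := by
  obtain ⟨-, hk, H⟩ := isCanonicalDecomp_iff.mp hd
  have h1n : idx 1 ≤ n := (H 0 k.succ_pos).2.1
  have hdrop : ∀ i ≤ n - idx 1, walkDrop w (idx 1) n i = w (idx 1 + i) := fun i hi => by
    rw [walkDrop, min_eq_left (by omega)]
  refine isCanonicalDecomp_iff.mpr ⟨Nat.sub_self _, by rw [hk], fun j hj => ?_⟩
  obtain ⟨hlt, hle, ha, hmax, hstrict⟩ := H (j + 1) (by omega)
  have h1j : idx 1 ≤ idx (j + 1) := hd.idx_mono (by omega) (by omega)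
  have hpos : ∀ {l}, idx 1 ≤ l → idx 1 + (l - idx 1) = l := fun hl => by omega
  refine ⟨by omega, by omega, ?_, fun i hi hin => ?_, fun i hi hin => ?_⟩
  · rw [hdrop _ (by omega), hdrop _ (by omega), hpos h1j, hpos (by omega), ha]
  · rw [hdrop _ hin, hdrop _ (by omega), hpos h1j]
    exact hmax _ (by omega) (by omega)
  · rw [hdrop _ hin, hdrop _ (by omega), hpos h1j]
    exact hstrict _ (by omega) (by omega)

end CanonicalDecomp

theorem IsHSWFrom.take_drop_of_isCanonicalDecomp {G : SimpleGraph V} {h : V → ℤ} {n k : ℕ}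
    {v v' : V} {w : ℕ → V} {a : ℕ → ℤ} {idx : ℕ → ℕ} (hw : IsHSWFrom G h n v w)
    (hd : IsCanonicalDecomp h n w (k + 1) a idx) {γ : G ≃g G} (hγv : γ (w (idx 1)) = v')
    (hγ : ∀ x y, h (γ y) - h (γ x) = h y - h x) :
    idx 1 ≤ n ∧
      (IsBridgeFrom G h (idx 1) v (walkTake w (idx 1)) ∧
        walkSpan h (idx 1) (walkTake w (idx 1)) = a 1) ∧
      IsHSWFrom G (-h) (n - idx 1) v' (fun i => γ (walkDrop w (idx 1) n i)) ∧
      IsCanonicalDecomp (-h) (n - idx 1) (fun i => γ (walkDrop w (idx 1) n i)) k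
        (fun j => a (j + 1)) (fun j => idx (j + 1) - idx 1) := by
  obtain ⟨h0, -, H⟩ := isCanonicalDecomp_iff.mp hd
  obtain ⟨hpos, hmn, ha, hmax, hstrict⟩ := H 0 k.succ_pos
  simp only [h0, zero_add] at hpos ha hmax hstrict
  set m := idx 1
  have habove : ∀ i, 1 ≤ i → i ≤ n → h (w 0) < h (w i) := hw.2
  have ha' : a 1 = h (w m) - h (w 0) := by rw [ha, abs_of_pos (by linarith [habove m hpos hmn])]
  have hle : ∀ i ≤ n, h (w i) ≤ h (w m) := fun i hi => by
    have := (abs_le.mp (hmax i (Nat.zero_le i) hi)).2; linarith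
  have hlt : ∀ i, m < i → i ≤ n → h (w i) < h (w m) := fun i hi hin => by
    have := (abs_lt.mp (hstrict i hi hin)).2; linarith
  have htake : ∀ i ≤ m, walkTake w m i = w i := fun i hi => by rw [walkTake, min_eq_left hi]
  have hdrop : ∀ i ≤ n - m, walkDrop w m n i = w (m + i) := fun i hi => by
    rw [walkDrop, min_eq_left (by omega)]
  have hbridge : IsBridgeFrom G h m v (walkTake w m) := by
    refine ⟨hw.1.take hmn, fun i hi him => ?_⟩
    rw [htake 0 (Nat.zero_le m), htake i him, htake m le_rfl]
    exact ⟨habove i hi (him.trans hmn), hle i (him.trans hmn)⟩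
  have hrest : IsHSWFrom G (-h) (n - m) (w m) (walkDrop w m n) := by
    refine ⟨hw.1.drop hmn, fun i hi hin => ?_⟩
    rw [hdrop 0 (Nat.zero_le _), hdrop i hin, add_zero, Pi.neg_apply, Pi.neg_apply,
      neg_lt_neg_iff]
    exact hlt _ (by omega) (by omega)
  refine ⟨hmn, ⟨hbridge, ?_⟩, hγv ▸ hrest.map (neg_apply_sub_neg_apply hγ),
    hd.tail.of_abs_sub_eq fun p _ q _ => ?_⟩
  · rw [hbridge.walkSpan_eq, htake 0 (Nat.zero_le m), htake m le_rfl, ha']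
  · rw [Pi.neg_apply, Pi.neg_apply, neg_sub_neg, hγ, abs_sub_comm]

theorem sum_Icc_one_succ {M : Type*} [AddCommMonoid M] (f : ℕ → M) (k : ℕ) :
    ∑ j ∈ Icc 1 (k + 1), f j = f 1 + ∑ j ∈ Icc 1 k, f (j + 1) := by
  induction k with
  | zero => simp
  | succ k ih => rw [sum_Icc_succ_top (by omega), ih, sum_Icc_succ_top (by omega), add_assoc]

theorem sum_filter_odd_Icc_succ (a : ℕ → ℤ) (k : ℕ) :
    ∑ j ∈ (Icc 1 (k + 1)).filter Odd, a j = a 1 + ∑ j ∈ (Icc 1 k).filter Even, a (j + 1) := by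
  simp [sum_filter, sum_Icc_one_succ, Nat.odd_add_one]

theorem sum_filter_even_Icc_succ (a : ℕ → ℤ) (k : ℕ) :
    ∑ j ∈ (Icc 1 (k + 1)).filter Even, a j = ∑ j ∈ (Icc 1 k).filter Odd, a (j + 1) := by
  simp [sum_filter, sum_Icc_one_succ, Nat.even_add_one]

section Counting

variable {G : SimpleGraph V} {h : V → ℤ}

theorem cauchyProduct_bridgeSpanCount_le (hlf : ∀ v : V, (G.neighborSet v).Finite)
    (ht : IsHeightTransitive G h) (n : ℕ) (v : V) (s t : ℤ) :
    cauchyProduct (fun m => bridgeSpanCount G h m v s) (fun m => bridgeSpanCount G h m v t) n ≤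
      bridgeSpanCount G h n v (s + t) := by
  choose τ hτv hτh using ht
  let A := fun m => {w // IsBridgeFrom G h m v w ∧ walkSpan h m w = s}
  let B := fun m => {w // IsBridgeFrom G h m v w ∧ walkSpan h m w = t}
  have (m : ℕ) : Finite (A m) := finite_of_isWalkFrom hlf fun _ hw => hw.1.1.1
  have (m : ℕ) : Finite (B m) := finite_of_isWalkFrom hlf fun _ hw => hw.1.1.1
  have : Finite {w // IsBridgeFrom G h n v w ∧ walkSpan h n w = s + t} :=
    finite_of_isWalkFrom hlf fun _ hw => hw.1.1.1
  refine (card_sigma_fin_prod_eq_cauchyProduct A B n).symm.trans_le ?_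
  have hm : ∀ m : Fin (n + 1), (m : ℕ) ≤ n := fun m => Nat.le_of_lt_succ m.2
  have hsecond : ∀ {m : ℕ} {w₁ w₂ : ℕ → V}, IsBridgeFrom G h (n - m) v w₂ →
      IsBridgeFrom G h (n - m) (w₁ m) (fun i => τ v (w₁ m) (w₂ i)) := by
    intro m w₁ w₂ hw₂
    simpa only [hτv] using hw₂.map (hτh v (w₁ m))
  refine Nat.card_le_card_of_injective
    (fun p => ⟨walkAppend p.2.1.1 p.1 (fun i => τ v (p.2.1.1 p.1) (p.2.2.1 i)),
      p.2.1.2.1.append (hsecond p.2.2.2.1) (hm p.1), by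
        rw [p.2.1.2.1.walkSpan_append (hsecond p.2.2.2.1) (hm p.1),
          p.2.2.2.1.walkSpan_map (hτh _ _), p.2.1.2.2, p.2.2.2.2]⟩) ?_
  rintro ⟨m, ⟨w₁, hw₁, hs⟩, ⟨w₂, hw₂, _⟩⟩ ⟨m', ⟨w₁', hw₁', hs'⟩, ⟨w₂', hw₂', _⟩⟩ hW
  replace hW := congrArg Subtype.val hW
  dsimp only at hW
  have hend : h (w₁ m) = h (w₁' m') := by
    rw [hw₁.height_end, hw₁'.height_end, hs, hs']
  have hle_iff : ∀ i ≤ n, i ≤ m ↔ i ≤ m' := fun i hi => by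
    rw [← hw₁.append_height_le_iff (hsecond hw₂) hi,
      ← hw₁'.append_height_le_iff (hsecond hw₂') hi, hW, hend]
  obtain rfl : m = m' :=
    Fin.ext (le_antisymm ((hle_iff m (hm m)).mp le_rfl) ((hle_iff m' (hm m')).mpr le_rfl))
  obtain rfl : w₁ = w₁' := by
    rw [← walkTake_walkAppend hw₁.1.1 _, hW, walkTake_walkAppend hw₁'.1.1]
  have hdrop := congrArg (walkDrop · m n) hW
  simp only [walkDrop_walkAppend (hsecond hw₂).1.1 (hm m),
    walkDrop_walkAppend (hsecond hw₂').1.1 (hm m)] at hdrop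
  obtain rfl : w₂ = w₂' := funext fun i => (τ v (w₁ m)).injective (congrFun hdrop i)
  rfl

theorem hswSeqCount_succ_le (hlf : ∀ v : V, (G.neighborSet v).Finite)
    (ht : IsHeightTransitive G h) (n : ℕ) (v : V) (k : ℕ) (a : ℕ → ℤ) :
    hswSeqCount G h n v (k + 1) a ≤
      cauchyProduct (fun m => bridgeSpanCount G h m v (a 1))
        (fun m => hswSeqCount G (-h) m v k (fun j => a (j + 1))) n := by
  choose τ hτv hτh using ht
  let A := fun m => {w // IsBridgeFrom G h m v w ∧ walkSpan h m w = a 1}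
  let B := fun m => {w // IsHSWFrom G (-h) m v w ∧
    ∃ idx, IsCanonicalDecomp (-h) m w k (fun j => a (j + 1)) idx}
  have (m : ℕ) : Finite (A m) := finite_of_isWalkFrom hlf fun _ hw => hw.1.1.1
  have (m : ℕ) : Finite (B m) := finite_of_isWalkFrom hlf fun _ hw => hw.1.1.1
  have hsplit : ∀ w : {w // IsHSWFrom G h n v w ∧ ∃ idx, IsCanonicalDecomp h n w (k + 1) a idx},
      ∃ m ≤ n, (IsBridgeFrom G h m v (walkTake w.1 m) ∧ walkSpan h m (walkTake w.1 m) = a 1) ∧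
        (IsHSWFrom G (-h) (n - m) v (fun i => τ (w.1 m) v (walkDrop w.1 m n i)) ∧
          ∃ idx, IsCanonicalDecomp (-h) (n - m) (fun i => τ (w.1 m) v (walkDrop w.1 m n i)) k
            (fun j => a (j + 1)) idx) := by
    rintro ⟨w, hw, idx, hd⟩
    obtain ⟨hmn, hfirst, hrest, hdrest⟩ := hw.take_drop_of_isCanonicalDecomp hd (hτv _ v) (hτh _ v)
    exact ⟨idx 1, hmn, hfirst, hrest, _, hdrest⟩
  choose m hmn hfirst hrest using hsplit
  refine (Nat.card_le_card_of_injective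
    (fun w => (⟨⟨m w, Nat.lt_succ_of_le (hmn w)⟩, ⟨_, hfirst w⟩, ⟨_, hrest w⟩⟩ :
      Σ m : Fin (n + 1), A m × B (n - m))) ?_).trans
    (card_sigma_fin_prod_eq_cauchyProduct A B n).le
  intro w w' hW
  have hm : m w = m w' := congrArg (fun s => (s.1 : ℕ)) hW
  have htake : walkTake w.1 (m w) = walkTake w'.1 (m w') := congrArg (fun s => s.2.1.1) hW
  have hdrop := congrArg (fun s => s.2.2.1) hW
  simp only at hdrop
  rw [← hm] at htake hdrop
  have hend : w.1 (m w) = w'.1 (m w) := by simpa [walkTake] using congrFun htake (m w)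
  rw [hend] at hdrop
  exact Subtype.ext (w.2.1.1.1.eq_of_walkTake_eq_of_walkDrop_eq w'.2.1.1.1 (hmn w) htake
    (funext fun i => (τ _ v).injective (congrFun hdrop i)))

theorem hswSeqCount_zero_le (n : ℕ) (v : V) (a : ℕ → ℤ) :
    hswSeqCount G h n v 0 a ≤
      cauchyProduct (fun m => bridgeSpanCount G h m v 0)
        (fun m => rbridgeSpanCount G h m v 0) n := by
  cases n with
  | zero =>
    have hone : cauchyProduct (fun m => bridgeSpanCount G h m v 0)
        (fun m => rbridgeSpanCount G h m v 0) 0 = 1 := by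
      simp [cauchyProduct, bridgeSpanCount_zero_zero, rbridgeSpanCount_eq_bridgeSpanCount_neg]
    rw [hone]
    refine (Nat.card_le_card_of_injective (fun _ => ()) fun w w' _ => Subtype.ext ?_).trans
      Nat.card_unique.le
    exact w.2.1.1.1.ext w'.2.1.1.1 fun i hi => by rw [Nat.le_zero.mp hi, w.2.1.1.1.1, w'.2.1.1.1.1]
  | succ n =>
    refine (Nat.card_eq_zero.mpr (Or.inl ⟨fun ⟨_, _, _, h0, hn, _⟩ => ?_⟩)).trans_le
      (Nat.zero_le _)
    omega

theorem hswSeqCount_le_cauchyProduct (hlf : ∀ v : V, (G.neighborSet v).Finite)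
    (ht : IsHeightTransitive G h) (k n : ℕ) (v : V) (a : ℕ → ℤ) :
    hswSeqCount G h n v k a ≤
      cauchyProduct (fun m => bridgeSpanCount G h m v (∑ j ∈ (Icc 1 k).filter Odd, a j))
        (fun m => rbridgeSpanCount G h m v (∑ j ∈ (Icc 1 k).filter Even, a j)) n := by
  induction k generalizing h n a with
  | zero => exact (hswSeqCount_zero_le n v a).trans_eq (by simp)
  | succ k ih =>
    set s := ∑ j ∈ (Icc 1 k).filter Odd, a (j + 1)
    set t := ∑ j ∈ (Icc 1 k).filter Even, a (j + 1)
    rw [sum_filter_odd_Icc_succ, sum_filter_even_Icc_succ]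
    calc hswSeqCount G h n v (k + 1) a
        ≤ cauchyProduct (fun m => bridgeSpanCount G h m v (a 1))
            (fun m => hswSeqCount G (-h) m v k (fun j => a (j + 1))) n :=
          hswSeqCount_succ_le hlf ht n v k a
      _ ≤ cauchyProduct (fun m => bridgeSpanCount G h m v (a 1))
            (cauchyProduct (fun m => rbridgeSpanCount G h m v s)
              (fun m => bridgeSpanCount G h m v t)) n :=
          cauchyProduct_mono (fun _ => le_rfl) (fun m => by
            simpa only [← rbridgeSpanCount_eq_bridgeSpanCount_neg, rbridgeSpanCount_neg]
              using ih ht.neg m (fun j => a (j + 1))) n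
      _ = cauchyProduct (cauchyProduct (fun m => bridgeSpanCount G h m v (a 1))
            (fun m => bridgeSpanCount G h m v t)) (fun m => rbridgeSpanCount G h m v s) n := by
          rw [cauchyProduct_comm (fun m => rbridgeSpanCount G h m v s), cauchyProduct_assoc]
      _ ≤ cauchyProduct (fun m => bridgeSpanCount G h m v (a 1 + t))
            (fun m => rbridgeSpanCount G h m v s) n :=
          cauchyProduct_mono (cauchyProduct_bridgeSpanCount_le hlf ht · v _ _) (fun _ => le_rfl) n

end Counting

theorem statement_4_general {V : Type*} (G : SimpleGraph V)
    (hlf : ∀ v : V, (G.neighborSet v).Finite)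
    (h : V → ℤ) (Γ : Subgroup (G ≃g G)) (hghf : IsGraphHeightFunction G h Γ)
    (htrans : ∀ u v : V, ∃ γ ∈ Γ, γ u = v)
    (n k : ℕ) (a : ℕ → ℤ) (v : V) :
    hswSeqCount G h n v k a ≤
      ∑ m ∈ Finset.range (n + 1),
        bridgeSpanCount G h m v (∑ j ∈ (Finset.Icc 1 k).filter (fun j => Odd j), a j) *
          rbridgeSpanCount G h (n - m) v
            (∑ j ∈ (Finset.Icc 1 k).filter (fun j => Even j), a j) :=
  hswSeqCount_le_cauchyProduct hlf (hghf.isHeightTransitive htrans) k n v a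

/-- In the transitive case,
`h_n(a_1,…,a_k) ≤ Σ_{m=0}^{n} b_m(a_1+a_3+…) · b̄_{n−m}(a_2+a_4+…)`. -/
theorem statement_4 {V : Type*} (G : SimpleGraph V)
    (hinf : Infinite V) (hlf : ∀ v : V, (G.neighborSet v).Finite) (hconn : G.Connected)
    (h : V → ℤ) (Γ : Subgroup (G ≃g G)) (hghf : IsGraphHeightFunction G h Γ)
    (htrans : ∀ u v : V, ∃ γ ∈ Γ, γ u = v)
    (n k : ℕ) (hn : 1 ≤ n) (hk : 1 ≤ k) (a : ℕ → ℤ)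
    (ha : ∀ j, 1 ≤ j → j < k → a (j + 1) < a j) (hak : 0 < a k) (v : V) :
    hswSeqCount G h n v k a ≤
      ∑ m ∈ Finset.range (n + 1),
        bridgeSpanCount G h m v (∑ j ∈ (Finset.Icc 1 k).filter (fun j => Odd j), a j) *
          rbridgeSpanCount G h (n - m) v
            (∑ j ∈ (Finset.Icc 1 k).filter (fun j => Even j), a j) :=
  statement_4_general G hlf h Γ hghf htrans n k a v
end
end

section
/- For the Grandparent graph GP with height function h(k,f) = k: the automorphism group Aut(GP) acts transitively on the vertices of GP; h is Aut(GP)-difference-invariant, i.e. h(γv) − h(γu) = h(v) − h(u) for every automorphism γ of GP and all vertices u,v; and every vertex has a neighbour of strictly smaller height and a neighbour of strictly larger height. Consequently (h, Aut(GP)) is a graph height function on GP. -/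
/-!
The predecessor edge of a vertex can be recognised from the graph alone
(`SimpleGraph.IsDownEdge`), so every automorphism commutes with `GPpred`. Any two vertices
have a common ancestor, and the height drops by one along `GPpred`, so automorphisms preserve
height differences. Conversely, adjacency is defined through `GPpred`, so every permutation
commuting with it is an automorphism; shifting the height and adding a fixed digit sequence
modulo 2 are such permutations, and together they act transitively.
-/

open Filter Finset

noncomputable section

variable {V : Type*}

/-- Vertices of the Grandparent graph: pairs `(k, f)` where `f i = false` for `i ≥ k`
and for all sufficiently small `i`. -/
def GPVertex : Type :=
  {p : ℤ × (ℤ → Bool) // (∀ i, p.1 ≤ i → p.2 i = false) ∧ ∃ N : ℤ, ∀ i ≤ N, p.2 i = false}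

/-- The predecessor map of the Grandparent graph. -/
def GPpred (v : GPVertex) : GPVertex :=
  ⟨(v.val.1 - 1, fun i => if i = v.val.1 - 1 then false else v.val.2 i), by
    constructor
    · intro i hi
      dsimp only at hi ⊢
      split
      · rfl
      · exact v.prop.1 i (by omega)
    · obtain ⟨N, hN⟩ := v.prop.2
      refine ⟨N, fun i hi => ?_⟩
      dsimp only
      split
      · rfl
      · exact hN i hi⟩

/-- The Grandparent graph. -/
def GP : SimpleGraph GPVertex where
  Adj u v := u ≠ v ∧
    (u = GPpred v ∨ v = GPpred u ∨ u = GPpred (GPpred v) ∨ v = GPpred (GPpred u))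
  symm := by
    constructor
    intro u v hv
    exact ⟨Ne.symm hv.1, by tauto⟩
  loopless := by
    constructor
    intro u hu
    exact hu.1 rfl

/-- The height of a vertex of the Grandparent graph. -/
def GPheight (v : GPVertex) : ℤ := v.val.1

theorem apply_iterate_of_apply_eq_sub_one {α : Type*} {p : α → α} {h : α → ℤ}
    (hp : ∀ v, h (p v) = h v - 1) (n : ℕ) (v : α) : h (p^[n] v) = h v - n := by
  induction n with
  | zero => simp
  | succ n ih => rw [Function.iterate_succ_apply', hp, ih]; push_cast; ring

/-- A height that drops by one along `p` is determined up to a constant once any two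
points have a common iterate, so maps commuting with `p` preserve its differences. -/
theorem sub_apply_eq_of_commute {α : Type*} {p γ : α → α} {h : α → ℤ}
    (hp : ∀ v, h (p v) = h v - 1) (hmeet : ∀ u v, ∃ a b : ℕ, p^[a] u = p^[b] v)
    (hγ : Function.Commute γ p) (u v : α) : h (γ v) - h (γ u) = h v - h u := by
  obtain ⟨a, b, hab⟩ := hmeet u v
  have hγab : p^[a] (γ u) = p^[b] (γ v) := by
    rw [← (hγ.iterate_right a).eq, ← (hγ.iterate_right b).eq, hab]
  have e₁ := congrArg h hab
  have e₂ := congrArg h hγab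
  simp only [apply_iterate_of_apply_eq_sub_one hp] at e₁ e₂
  omega

theorem quasiTransitiveSub_top_of_forall_exists_iso_apply_eq [Nonempty V] {G : SimpleGraph V}
    (h : ∀ u v : V, ∃ γ : G ≃g G, γ u = v) : QuasiTransitiveSub G ⊤ := by
  obtain ⟨s⟩ := ‹Nonempty V›
  refine ⟨{s}, fun v => ?_⟩
  obtain ⟨γ, hγ⟩ := h s v
  exact ⟨γ, Subgroup.mem_top γ, s, Finset.mem_singleton_self s, hγ⟩

namespace SimpleGraph

variable {W : Type*} {G : SimpleGraph V} {G' : SimpleGraph W}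

/-- In `GP`, an edge between parent and child lies in three triangles, one between
grandparent and grandchild in only one; among the parent–child edges at `v`, only the one
to `GPpred v` closes two triangles with other such edges. -/
def IsDownEdge (G : SimpleGraph V) (v w : V) : Prop :=
  G.Adj v w ∧ {x ∈ G.commonNeighbors v w | (G.commonNeighbors v x).Nontrivial}.Nontrivial

theorem Iso.image_commonNeighbors_subset (γ : G ≃g G') (v w : V) :
    γ '' G.commonNeighbors v w ⊆ G'.commonNeighbors (γ v) (γ w) := by
  rintro _ ⟨x, ⟨hvx, hwx⟩, rfl⟩
  exact ⟨γ.map_adj_iff.2 hvx, γ.map_adj_iff.2 hwx⟩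

theorem IsDownEdge.map (γ : G ≃g G') {v w : V} (h : G.IsDownEdge v w) :
    G'.IsDownEdge (γ v) (γ w) := by
  refine ⟨γ.map_adj_iff.2 h.1, (h.2.image γ.injective).mono ?_⟩
  rintro _ ⟨x, ⟨hx, hvx⟩, rfl⟩
  exact ⟨γ.image_commonNeighbors_subset v w ⟨x, hx, rfl⟩,
    (hvx.image γ.injective).mono (γ.image_commonNeighbors_subset v x)⟩

end SimpleGraph

namespace GPVertex

@[ext]
theorem ext {u v : GPVertex} (h₁ : u.val.1 = v.val.1) (h₂ : ∀ i, u.val.2 i = v.val.2 i) :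
    u = v :=
  Subtype.ext (Prod.ext h₁ (funext h₂))

instance : Nonempty GPVertex := ⟨⟨(0, fun _ => false), fun _ _ => rfl, 0, fun _ _ => rfl⟩⟩

end GPVertex

theorem GPheight_GPpred (v : GPVertex) : GPheight (GPpred v) = GPheight v - 1 := rfl

theorem GP_adj_iff {u v : GPVertex} :
    GP.Adj u v ↔
      u = GPpred v ∨ v = GPpred u ∨ u = GPpred (GPpred v) ∨ v = GPpred (GPpred u) := by
  refine ⟨And.right, fun h => ⟨?_, h⟩⟩
  rintro rfl
  rcases h with h | h | h | h <;>
    · have := congrArg GPheight h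
      simp only [GPheight_GPpred] at this
      omega

theorem GP_adj_height {v a : GPVertex} (h : GP.Adj v a) :
    GPheight a = GPheight v - 1 ∨ GPheight a = GPheight v - 2 ∨
      GPheight a = GPheight v + 1 ∨ GPheight a = GPheight v + 2 := by
  rcases GP_adj_iff.1 h with h | h | h | h <;>
    · have := congrArg GPheight h
      simp only [GPheight_GPpred] at this
      omega

theorem eq_GPpred_of_GP_adj {v a : GPVertex} (h : GP.Adj v a)
    (ha : GPheight a = GPheight v - 1) : a = GPpred v := by
  rcases GP_adj_iff.1 h with h | h | h | h
  all_goals first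
    | exact h
    | (have := congrArg GPheight h; simp only [GPheight_GPpred] at this; omega)

theorem eq_GPpred_GPpred_of_GP_adj {v a : GPVertex} (h : GP.Adj v a)
    (ha : GPheight a = GPheight v + 2) : v = GPpred (GPpred a) := by
  rcases GP_adj_iff.1 h with h | h | h | h
  all_goals first
    | exact h
    | (have := congrArg GPheight h; simp only [GPheight_GPpred] at this; omega)

theorem GP_commonNeighbors_GPpred_GPpred_subset (v : GPVertex) :
    GP.commonNeighbors v (GPpred (GPpred v)) ⊆ {GPpred v} := by
  rintro a ⟨hva, hpa⟩
  have h₁ := GP_adj_height hva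
  have h₂ := GP_adj_height hpa
  simp only [GPheight_GPpred] at h₂
  exact eq_GPpred_of_GP_adj hva (by omega)

def GPchild (b : Bool) (v : GPVertex) : GPVertex :=
  ⟨(v.val.1 + 1, fun i => if i = v.val.1 then b else v.val.2 i), by
    refine ⟨fun i hi => ?_, ?_⟩
    · dsimp only at hi ⊢
      rw [if_neg (by omega)]
      exact v.prop.1 i (by omega)
    · obtain ⟨N, hN⟩ := v.prop.2
      refine ⟨min N (v.val.1 - 1), fun i hi => ?_⟩
      dsimp only
      rw [if_neg (by omega)]
      exact hN i (by omega)⟩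

theorem GPheight_GPchild (b : Bool) (v : GPVertex) : GPheight (GPchild b v) = GPheight v + 1 :=
  rfl

theorem GPpred_GPchild (b : Bool) (v : GPVertex) : GPpred (GPchild b v) = v := by
  ext i
  · exact add_sub_cancel_right _ _
  · change (if i = v.val.1 + 1 - 1 then false else if i = v.val.1 then b else v.val.2 i) = _
    split_ifs with h₁ h₂
    · exact (v.prop.1 i (by omega)).symm
    · omega
    · rfl

theorem GPchild_false_ne_true (v : GPVertex) : GPchild false v ≠ GPchild true v := by
  intro h
  have := congrArg (fun w : GPVertex => w.val.2 v.val.1) h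
  simp [GPchild] at this

theorem GP_adj_GPpred (v : GPVertex) : GP.Adj v (GPpred v) :=
  GP_adj_iff.2 (Or.inr (Or.inl rfl))

theorem GP_adj_GPchild (b : Bool) (v : GPVertex) : GP.Adj v (GPchild b v) :=
  GP_adj_iff.2 (Or.inl (GPpred_GPchild b v).symm)

theorem GP_isDownEdge_GPpred (v : GPVertex) : GP.IsDownEdge v (GPpred v) := by
  have hchild : ∀ b, GPchild b v ∈
      {x ∈ GP.commonNeighbors v (GPpred v) | (GP.commonNeighbors v x).Nontrivial} := by
    intro b
    have hgrand : GP.Adj v (GPchild false (GPchild b v)) :=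
      GP_adj_iff.2 (Or.inr (Or.inr (Or.inl (by rw [GPpred_GPchild, GPpred_GPchild]))))
    have hup : GP.Adj (GPpred v) (GPchild b v) :=
      GP_adj_iff.2 (Or.inr (Or.inr (Or.inl (by rw [GPpred_GPchild]))))
    refine ⟨⟨GP_adj_GPchild b v, hup⟩, GPpred v, ⟨GP_adj_GPpred v, hup.symm⟩,
      GPchild false (GPchild b v), ⟨hgrand, GP_adj_GPchild false _⟩, fun h => ?_⟩
    have := congrArg GPheight h
    simp only [GPheight_GPpred, GPheight_GPchild] at this
    omega
  exact ⟨GP_adj_GPpred v, _, hchild false, _, hchild true, GPchild_false_ne_true v⟩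

theorem eq_GPpred_of_GP_isDownEdge {v w : GPVertex} (h : GP.IsDownEdge v w) :
    w = GPpred v := by
  obtain ⟨hvw, hS⟩ := h
  rcases GP_adj_iff.1 hvw with hv | hw | hv | hw
  · refine absurd (fun x hx => ?_) (hS.not_subset_singleton (x := GPpred v))
    obtain ⟨⟨hvx, hwx⟩, hx⟩ := hx
    have h₁ := GP_adj_height hvx
    have h₂ := GP_adj_height hwx
    have hwv : GPheight w = GPheight v + 1 := by rw [hv, GPheight_GPpred]; ring
    rcases h₁ with h₁ | h₁ | h₁ | h₁
    · exact eq_GPpred_of_GP_adj hvx h₁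
    all_goals try omega
    rw [eq_GPpred_GPpred_of_GP_adj hvx h₁, SimpleGraph.commonNeighbors_symm] at hx
    exact absurd (GP_commonNeighbors_GPpred_GPpred_subset x) hx.not_subset_singleton
  · exact hw
  · refine absurd (fun x hx => ?_) (hS.not_subset_singleton (x := GPpred w))
    rw [hv, SimpleGraph.commonNeighbors_symm] at hx
    exact GP_commonNeighbors_GPpred_GPpred_subset w hx.1
  · refine absurd (fun x hx => ?_) (hS.not_subset_singleton (x := GPpred v))
    rw [hw] at hx
    exact GP_commonNeighbors_GPpred_GPpred_subset v hx.1

theorem GPpred_commute (γ : GP ≃g GP) : Function.Commute γ GPpred := fun v =>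
  eq_GPpred_of_GP_isDownEdge ((GP_isDownEdge_GPpred v).map γ)

theorem GPpred_iterate_val (n : ℕ) (v : GPVertex) :
    (GPpred^[n] v).val = (v.val.1 - n, fun i => if v.val.1 - n ≤ i then false else v.val.2 i) := by
  induction n with
  | zero =>
    refine Prod.ext (by simp) (funext fun i => ?_)
    simp only [Function.iterate_zero, id_eq]
    split_ifs with h
    · exact v.prop.1 i (by simpa using h)
    · rfl
  | succ n ih =>
    rw [Function.iterate_succ_apply']
    refine Prod.ext (by simp only [GPpred, ih]; push_cast; ring) (funext fun i => ?_)
    simp only [GPpred, ih]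
    push_cast
    split_ifs <;> first | rfl | omega

/-- Below the heights of `u` and `v` and below every digit they set, their ancestors agree. -/
theorem exists_GPpred_iterate_eq (u v : GPVertex) : ∃ a b : ℕ, GPpred^[a] u = GPpred^[b] v := by
  obtain ⟨Nu, hNu⟩ := u.prop.2
  obtain ⟨Nv, hNv⟩ := v.prop.2
  set m := min (min Nu Nv) (min u.val.1 v.val.1)
  refine ⟨(u.val.1 - m).toNat, (v.val.1 - m).toNat, Subtype.ext ?_⟩
  rw [GPpred_iterate_val, GPpred_iterate_val, Int.toNat_of_nonneg (by omega),
    Int.toNat_of_nonneg (by omega), sub_sub_cancel, sub_sub_cancel]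
  refine Prod.ext rfl (funext fun i => ?_)
  dsimp only
  split_ifs with h
  · rfl
  · exact (hNu i (by omega)).trans (hNv i (by omega)).symm

theorem GP_adj_map_of_commute {e : GPVertex → GPVertex} (he : Function.Commute e GPpred)
    {u v : GPVertex} (h : GP.Adj u v) : GP.Adj (e u) (e v) := by
  rw [GP_adj_iff] at h ⊢
  rcases h with rfl | rfl | rfl | rfl <;> simp [he.eq]

def GPIsoOfCommute (e : GPVertex ≃ GPVertex) (he : Function.Commute e GPpred) : GP ≃g GP where
  toEquiv := e
  map_rel_iff' {u v} := by
    refine ⟨fun h => ?_, GP_adj_map_of_commute he⟩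
    have he' : Function.Commute e.symm GPpred :=
      Function.Semiconj.inverse_left he e.left_inv e.right_inv
    simpa using GP_adj_map_of_commute he' h

def GPshift (d : ℤ) (v : GPVertex) : GPVertex :=
  ⟨(v.val.1 + d, fun i => v.val.2 (i - d)), by
    refine ⟨fun i hi => v.prop.1 _ (by dsimp only at hi; omega), ?_⟩
    obtain ⟨N, hN⟩ := v.prop.2
    exact ⟨N + d, fun i hi => hN _ (by omega)⟩⟩

theorem GPshift_neg_GPshift (d : ℤ) (v : GPVertex) : GPshift (-d) (GPshift d v) = v := by
  ext i
  · exact add_neg_cancel_right _ _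
  · exact congrArg v.val.2 (by ring)

theorem GPshift_commute (d : ℤ) : Function.Commute (GPshift d) GPpred := fun v => by
  ext i
  · exact sub_add_eq_add_sub _ _ _
  · change (if i - d = v.val.1 - 1 then false else v.val.2 (i - d)) =
      if i = v.val.1 + d - 1 then false else v.val.2 (i - d)
    split_ifs <;> first | rfl | omega

def GPflip (w v : GPVertex) : GPVertex :=
  ⟨(v.val.1, fun i => if i < v.val.1 then xor (v.val.2 i) (w.val.2 i) else false), by
    refine ⟨fun i hi => if_neg (by dsimp only at hi; omega), ?_⟩
    obtain ⟨Nv, hNv⟩ := v.prop.2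
    obtain ⟨Nw, hNw⟩ := w.prop.2
    refine ⟨min Nv Nw, fun i hi => ?_⟩
    dsimp only
    split_ifs
    · rw [hNv i (by omega), hNw i (by omega)]; rfl
    · rfl⟩

theorem GPflip_involutive (w : GPVertex) : Function.Involutive (GPflip w) := fun v => by
  ext i
  · rfl
  · change (if i < v.val.1 then
        xor (if i < v.val.1 then xor (v.val.2 i) (w.val.2 i) else false) (w.val.2 i)
      else false) = v.val.2 i
    split_ifs with h
    · simp
    · exact (v.prop.1 i (by omega)).symm

theorem GPflip_commute (w : GPVertex) : Function.Commute (GPflip w) GPpred := fun v => by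
  ext i
  · rfl
  · change (if i < v.val.1 - 1 then
        xor (if i = v.val.1 - 1 then false else v.val.2 i) (w.val.2 i) else false) =
      if i = v.val.1 - 1 then false else
        if i < v.val.1 then xor (v.val.2 i) (w.val.2 i) else false
    split_ifs <;> first | rfl | omega

theorem GPflip_GPflip_self {u v : GPVertex} (h : GPheight u = GPheight v) :
    GPflip v (GPflip u u) = v := by
  ext i
  · exact h
  · change (if i < u.val.1 then
        xor (if i < u.val.1 then xor (u.val.2 i) (u.val.2 i) else false) (v.val.2 i)
      else false) = v.val.2 i
    split_ifs with hi
    · simp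
    · exact (v.prop.1 i (by unfold GPheight at h; omega)).symm

theorem GP_exists_iso_apply_eq (u v : GPVertex) : ∃ γ : GP ≃g GP, γ u = v := by
  set d := GPheight v - GPheight u
  let shift : GP ≃g GP := GPIsoOfCommute
    ⟨GPshift d, GPshift (-d), GPshift_neg_GPshift d, fun v => by simpa using GPshift_neg_GPshift (-d) v⟩
    (GPshift_commute d)
  let flip (w : GPVertex) : GP ≃g GP :=
    GPIsoOfCommute (GPflip_involutive w).toPerm (GPflip_commute w)
  refine ⟨(shift.trans (flip (GPshift d u))).trans (flip v), GPflip_GPflip_self ?_⟩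
  change GPheight u + d = GPheight v
  ring

theorem GPheight_sub_GPheight_map (γ : GP ≃g GP) (u v : GPVertex) :
    GPheight (γ v) - GPheight (γ u) = GPheight v - GPheight u :=
  sub_apply_eq_of_commute GPheight_GPpred exists_GPpred_iterate_eq (GPpred_commute γ) u v

theorem exists_GP_adj_GPheight_lt_lt (v : GPVertex) : ∃ u w : GPVertex, GP.Adj v u ∧
    GP.Adj v w ∧ GPheight u < GPheight v ∧ GPheight v < GPheight w :=
  ⟨GPpred v, GPchild false v, GP_adj_GPpred v, GP_adj_GPchild false v,
    by rw [GPheight_GPpred]; omega, by rw [GPheight_GPchild]; omega⟩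

/-- `Aut(GP)` acts transitively on `GP`, the height `h(k,f) = k` is
`Aut(GP)`-difference-invariant, every vertex has neighbours of strictly smaller and
strictly larger height; consequently `(GPheight, Aut(GP))` is a graph height function. -/
theorem statement_12 :
    (∀ u v : GPVertex, ∃ γ : GP ≃g GP, γ u = v) ∧
    (∀ γ : GP ≃g GP, ∀ u v : GPVertex,
      GPheight (γ v) - GPheight (γ u) = GPheight v - GPheight u) ∧
    (∀ v : GPVertex, ∃ u w : GPVertex, GP.Adj v u ∧ GP.Adj v w ∧
      GPheight u < GPheight v ∧ GPheight v < GPheight w) ∧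
    IsGraphHeightFunction GP GPheight ⊤ :=
  ⟨GP_exists_iso_apply_eq, GPheight_sub_GPheight_map, exists_GP_adj_GPheight_lt_lt,
    quasiTransitiveSub_top_of_forall_exists_iso_apply_eq GP_exists_iso_apply_eq,
    fun γ _ => GPheight_sub_GPheight_map γ, exists_GP_adj_GPheight_lt_lt⟩
end
end
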